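/- arXiv:2307.15227 — 7 statements merged into one kernel-verified Lean document; each statement's English description precedes it below -/
import Mathlib

section
/- In the braid group B_n (n ≥ 2), for all indices 1 ≤ p < q < r < s ≤ n, the pure braid generators satisfy the commutation relations [a_{pq}, a_{rs}] = 1 and [a_{ps}, a_{qr}] = 1. -/
/-- The braid relations on generators `σ_1, …, σ_{n-1}` (generator `i : Fin (n-1)`
corresponds to `σ_{i+1}`): `σ_i σ_{i+1} σ_i = σ_{i+1} σ_i σ_{i+1}` and
`σ_i σ_j = σ_j σ_i` for `|i - j| ≥ 2`. -/
def braidRels (n : ℕ) : Set (FreeGroup (Fin (n - 1))) :=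
  { r | (∃ i j : Fin (n - 1), (i : ℕ) + 1 = (j : ℕ) ∧
          r = FreeGroup.of i * FreeGroup.of j * FreeGroup.of i *
              (FreeGroup.of j * FreeGroup.of i * FreeGroup.of j)⁻¹) ∨
        (∃ i j : Fin (n - 1), (i : ℕ) + 2 ≤ (j : ℕ) ∧
          r = FreeGroup.of i * FreeGroup.of j * (FreeGroup.of j * FreeGroup.of i)⁻¹) }

/-- The braid group `B_n`, presented on `σ_1, …, σ_{n-1}` with the braid relations. -/
abbrev BraidGroup (n : ℕ) := PresentedGroup (braidRels n)

/-- The braid generator `σ_k` (`1 ≤ k ≤ n-1`, 1-based); junk value `1` out of range. -/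
def braidSigma (n k : ℕ) : BraidGroup n :=
  if h : k - 1 < n - 1 then PresentedGroup.of (⟨k - 1, h⟩ : Fin (n - 1)) else 1

/-- The pure braid generator
`a_{ij} = (σ_{j-1} σ_{j-2} ⋯ σ_{i+1}) σ_i² (σ_{j-1} σ_{j-2} ⋯ σ_{i+1})⁻¹`. -/
def braidA (n i j : ℕ) : BraidGroup n :=
  ((List.range (j - 1 - i)).map (fun t => braidSigma n (j - 1 - t))).prod *
    (braidSigma n i) ^ 2 *
    (((List.range (j - 1 - i)).map (fun t => braidSigma n (j - 1 - t))).prod)⁻¹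

/-!
The generators occurring in `a_{pq}` are `σ_p, …, σ_{q-1}`, those in `a_{rs}` are `σ_r, …, σ_{s-1}`,
and any two of them are at distance at least two, so they commute.
For the nested pair put `W = σ_{s-1} ⋯ σ_{p+1}`. The braid relation gives `W σ_{k+1} W⁻¹ = σ_k`
for `p < k < s - 1`, hence `a_{qr} = W a_{q+1,r+1} W⁻¹`, while `a_{ps} = W σ_p² W⁻¹`;
and `σ_p` commutes with `σ_{q+1}, …, σ_r`, the generators of `a_{q+1,r+1}`.
-/

namespace BraidGroup

variable {n : ℕ}

lemma braidSigma_commute {k l : ℕ} (hk : 1 ≤ k) (hkl : k + 2 ≤ l) :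
    Commute (braidSigma n k) (braidSigma n l) := by
  unfold braidSigma
  split_ifs
  · exact PresentedGroup.mk_eq_mk_of_mul_inv_mem (Or.inr ⟨_, _, by simp; omega, rfl⟩)
  all_goals simp

lemma braidSigma_braid {k : ℕ} (hk : 1 ≤ k) (hkn : k + 2 ≤ n) :
    braidSigma n k * braidSigma n (k + 1) * braidSigma n k =
      braidSigma n (k + 1) * braidSigma n k * braidSigma n (k + 1) := by
  unfold braidSigma
  rw [dif_pos (by omega), dif_pos (by omega)]
  exact PresentedGroup.mk_eq_mk_of_mul_inv_mem (Or.inl ⟨_, _, by simp; omega, rfl⟩)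

/-- `σ_{b-1} σ_{b-2} ⋯ σ_a`, the empty product when `b ≤ a`. -/
def sigmaDesc (n a b : ℕ) : BraidGroup n :=
  ((List.range (b - a)).map fun t => braidSigma n (b - 1 - t)).prod

lemma sigmaDesc_of_le {a b : ℕ} (h : b ≤ a) : sigmaDesc n a b = 1 := by
  simp [sigmaDesc, Nat.sub_eq_zero_of_le h]

lemma sigmaDesc_succ {a b : ℕ} (h : a ≤ b) :
    sigmaDesc n a (b + 1) = braidSigma n b * sigmaDesc n a b := by
  rw [sigmaDesc, show b + 1 - a = b - a + 1 by omega, List.range_succ_eq_map, List.map_cons,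
    List.map_map, List.prod_cons, sigmaDesc]
  congr 2
  refine List.map_congr_left fun t _ => ?_
  simp only [Function.comp_apply]
  congr 1
  omega

lemma commute_sigmaDesc {x : BraidGroup n} {a b : ℕ}
    (h : ∀ m, a ≤ m → m < b → Commute x (braidSigma n m)) : Commute x (sigmaDesc n a b) :=
  Commute.list_prod_right _ _ fun y hy => by
    obtain ⟨t, ht, rfl⟩ := List.mem_map.mp hy
    exact h _ (by simp at ht; omega) (by simp at ht; omega)

lemma braidA_eq_conj (i j : ℕ) :
    braidA n i j = sigmaDesc n (i + 1) j * braidSigma n i ^ 2 * (sigmaDesc n (i + 1) j)⁻¹ := by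
  rw [braidA, sigmaDesc, show j - (i + 1) = j - 1 - i by omega]

lemma commute_braidA {x : BraidGroup n} {i j : ℕ} (hij : i < j)
    (h : ∀ m, i ≤ m → m < j → Commute x (braidSigma n m)) : Commute x (braidA n i j) := by
  have hD : Commute x (sigmaDesc n (i + 1) j) :=
    commute_sigmaDesc fun m him hmj => h m (by omega) hmj
  rw [braidA_eq_conj]
  exact (hD.mul_right ((h i le_rfl hij).pow_right 2)).mul_right hD.inv_right

lemma semiconjBy_sigmaDesc_braidSigma {a b k : ℕ} (ha : 1 ≤ a) (hak : a ≤ k) (hkb : k + 2 ≤ b)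
    (hbn : b ≤ n) :
    SemiconjBy (sigmaDesc n a b) (braidSigma n (k + 1)) (braidSigma n k) := by
  induction b, hkb using Nat.le_induction with
  | base =>
    have hσD : Commute (braidSigma n (k + 1)) (sigmaDesc n a k) :=
      commute_sigmaDesc fun m ham hmk => (braidSigma_commute (by omega) (by omega)).symm
    rw [sigmaDesc_succ (by omega), sigmaDesc_succ (by omega)]
    unfold SemiconjBy
    calc braidSigma n (k + 1) * (braidSigma n k * sigmaDesc n a k) * braidSigma n (k + 1)
        = braidSigma n (k + 1) * braidSigma n k * braidSigma n (k + 1) * sigmaDesc n a k := by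
          simp only [mul_assoc, ← hσD.eq]
      _ = braidSigma n k * (braidSigma n (k + 1) * (braidSigma n k * sigmaDesc n a k)) := by
          rw [← braidSigma_braid (by omega) (by omega)]; group
  | succ b hkb ih =>
    rw [sigmaDesc_succ (by omega)]
    exact (braidSigma_commute (by omega) (by omega)).symm.semiconjBy.mul_left (ih (by omega))

lemma semiconjBy_sigmaDesc_sigmaDesc {A B a b : ℕ} (hA : 1 ≤ A) (hAa : A ≤ a) (hbB : b + 1 ≤ B)
    (hBn : B ≤ n) :
    SemiconjBy (sigmaDesc n A B) (sigmaDesc n (a + 1) (b + 1)) (sigmaDesc n a b) := by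
  induction b with
  | zero => simp [sigmaDesc_of_le]
  | succ b ih =>
    by_cases hab : a ≤ b
    · rw [sigmaDesc_succ (by omega), sigmaDesc_succ hab]
      exact (semiconjBy_sigmaDesc_braidSigma hA (by omega) (by omega) hBn).mul_right
        (ih (by omega))
    · simp [sigmaDesc_of_le, show b + 1 ≤ a by omega]

lemma braidA_eq_conj_braidA_succ {A B i j : ℕ} (hA : 1 ≤ A) (hAi : A ≤ i) (hij : i < j)
    (hjB : j + 1 ≤ B) (hBn : B ≤ n) :
    braidA n i j = sigmaDesc n A B * braidA n (i + 1) (j + 1) * (sigmaDesc n A B)⁻¹ := by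
  have hD := semiconjBy_sigmaDesc_sigmaDesc (n := n) (a := i + 1) (b := j) hA (by omega) hjB hBn
  have hσ := semiconjBy_sigmaDesc_braidSigma (n := n) hA hAi (by omega) hBn
  refine eq_mul_inv_of_mul_eq (SemiconjBy.eq ?_).symm
  rw [braidA_eq_conj, braidA_eq_conj]
  exact (hD.mul_right (hσ.pow_right 2)).mul_right hD.inv_right

end BraidGroup

open BraidGroup in
theorem braid_pure_commutations_general (n : ℕ) (p q r s : ℕ)
    (hp : 1 ≤ p) (hpq : p < q) (hqr : q < r) (hrs : r < s) (hs : s ≤ n) :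
    braidA n p q * braidA n r s * (braidA n p q)⁻¹ * (braidA n r s)⁻¹ = 1 ∧
    braidA n p s * braidA n q r * (braidA n p s)⁻¹ * (braidA n q r)⁻¹ = 1 := by
  refine ⟨Commute.commutator_eq ?_, Commute.commutator_eq ?_⟩
  · exact commute_braidA hrs fun m hrm _ => (commute_braidA hpq fun l _ hlq =>
      (braidSigma_commute (by omega) (by omega)).symm).symm
  · have hσ : Commute (braidSigma n p ^ 2) (braidA n (q + 1) (r + 1)) :=
      commute_braidA (by omega) fun m hqm _ => (braidSigma_commute hp (by omega)).pow_left 2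
    rw [braidA_eq_conj, braidA_eq_conj_braidA_succ (by omega) hpq hqr hrs hs]
    exact (Commute.conj_iff _).mpr hσ

/-- In the braid group `B_n` (`n ≥ 2`), for `1 ≤ p < q < r < s ≤ n`,
`[a_{pq}, a_{rs}] = 1` and `[a_{ps}, a_{qr}] = 1`. -/
theorem braid_pure_commutations (n : ℕ) (hn : 2 ≤ n) (p q r s : ℕ)
    (hp : 1 ≤ p) (hpq : p < q) (hqr : q < r) (hrs : r < s) (hs : s ≤ n) :
    braidA n p q * braidA n r s * (braidA n p q)⁻¹ * (braidA n r s)⁻¹ = 1 ∧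
    braidA n p s * braidA n q r * (braidA n p s)⁻¹ * (braidA n q r)⁻¹ = 1 :=
  braid_pure_commutations_general n p q r s hp hpq hqr hrs hs
end

section
/- In the braid group B_n (n ≥ 2), for all indices 1 ≤ p < q < r ≤ n, the pure braid generators satisfy a_{pr} a_{qr} a_{pq} = a_{qr} a_{pq} a_{pr} = a_{pq} a_{pr} a_{qr}. -/
/-!
Write `W(a, b) = σ_{b-1} ⋯ σ_{a+1}` (`braidSigmaDesc`), so that `a_{ab}` is the conjugate of
`σ_a²` by `W(a, b)`. For `p < q < r` we have `W(p, r) = W(q, r) σ_q W(p, q)`, and `W(q, r)`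
commutes with `σ_p` and `W(p, q)`. Hence conjugating by `W(q, r)⁻¹` turns `a_{pq}, a_{qr}, a_{pr}`
into `β, σ_q², σ_q β σ_q⁻¹` with `β = a_{pq}`. By induction on `q`, using the braid relation
`σ_q σ_{q+1} σ_q = σ_{q+1} σ_q σ_{q+1}`, the elements `σ_q` and `β` satisfy
`σ_q β σ_q β = β σ_q β σ_q`, and this relation alone yields the three equal products.
-/

section Group

variable {G : Type*} [Group G]

theorem sq_braid4_of_braid {a b : G} (h : a * b * a = b * a * b) :
    a * b ^ 2 * a * b ^ 2 = b ^ 2 * a * b ^ 2 * a :=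
  calc a * b ^ 2 * a * b ^ 2 = a * b * (b * a * b) * b := by simp only [sq, mul_assoc]
    _ = a * b * (a * b * a) * b := by rw [h]
    _ = (a * b * a) * (b * a * b) := by group
    _ = (b * a * b) * (b * a * b) := by rw [h]
    _ = (b * a * b) * (a * b * a) := by rw [h]
    _ = b * (a * b * a) * (b * a) := by group
    _ = b * (b * a * b) * (b * a) := by rw [h]
    _ = b ^ 2 * a * b ^ 2 * a := by simp only [sq, mul_assoc]

theorem conj_braid4_of_braid {x s g : G} (hxs : x * s * x = s * x * s) (hxg : Commute x g)
    (hsg : s * g * s * g = g * s * g * s) :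
    x * (s * g * s⁻¹) * x * (s * g * s⁻¹) = (s * g * s⁻¹) * x * (s * g * s⁻¹) * x := by
  have hx : s⁻¹ * x * s = x * s * x⁻¹ := by
    rw [eq_mul_inv_iff_mul_eq, mul_assoc, mul_assoc, inv_mul_eq_iff_eq_mul, ← mul_assoc,
      ← mul_assoc, hxs]
  have hg : x⁻¹ * g * x = g := by rw [mul_assoc, ← hxg.eq, inv_mul_cancel_left]
  calc x * (s * g * s⁻¹) * x * (s * g * s⁻¹)
      = s * (s⁻¹ * x * s) * g * (s⁻¹ * x * s) * g * s⁻¹ := by group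
    _ = s * x * s * (x⁻¹ * g * x) * s * (x⁻¹ * g * x) * x⁻¹ * s⁻¹ := by rw [hx]; group
    _ = s * x * (s * g * s * g) * x⁻¹ * s⁻¹ := by rw [hg]; group
    _ = s * x * (g * s * g * s) * x⁻¹ * s⁻¹ := by rw [hsg]
    _ = s * x * (x⁻¹ * g * x) * s * (x⁻¹ * g * x) * s * x⁻¹ * s⁻¹ := by rw [hg]; group
    _ = s * g * (s⁻¹ * x * s) * g * (s⁻¹ * x * s) * s⁻¹ := by rw [hx]; group
    _ = (s * g * s⁻¹) * x * (s * g * s⁻¹) * x := by group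

theorem braid_triple_of_braid4 {x b : G} (h : x * b * x * b = b * x * b * x) :
    (x * b * x⁻¹) * x ^ 2 * b = x ^ 2 * b * (x * b * x⁻¹) ∧
      x ^ 2 * b * (x * b * x⁻¹) = b * (x * b * x⁻¹) * x ^ 2 := by
  have hmid : x ^ 2 * b * (x * b * x⁻¹) = x * b * x * b :=
    calc x ^ 2 * b * (x * b * x⁻¹) = x * (x * b * x * b) * x⁻¹ := by simp only [sq, mul_assoc]
      _ = x * (b * x * b * x) * x⁻¹ := by rw [h]
      _ = x * b * x * b := by group
  constructor
  · rw [hmid]; simp only [sq, mul_assoc, inv_mul_cancel_left]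
  · rw [hmid, h]; simp only [sq, mul_assoc, inv_mul_cancel_left]

end Group

theorem braidSigma_braid {n k : ℕ} (hk : 1 ≤ k) (hkn : k + 1 < n) :
    braidSigma n (k + 1) * braidSigma n k * braidSigma n (k + 1) =
      braidSigma n k * braidSigma n (k + 1) * braidSigma n k := by
  have hi : k - 1 < n - 1 := by omega
  have hj : k + 1 - 1 < n - 1 := by omega
  rw [braidSigma, braidSigma, dif_pos hi, dif_pos hj]
  symm
  exact PresentedGroup.mk_eq_mk_of_mul_inv_mem (Or.inl ⟨_, _, by simp only; omega, rfl⟩)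

theorem braidSigma_commute {n a b : ℕ} (ha : 1 ≤ a) (hab : a + 2 ≤ b) :
    Commute (braidSigma n a) (braidSigma n b) := by
  by_cases hb : b - 1 < n - 1
  · have ha' : a - 1 < n - 1 := by omega
    rw [braidSigma, braidSigma, dif_pos ha', dif_pos hb]
    exact PresentedGroup.mk_eq_mk_of_mul_inv_mem (Or.inr ⟨_, _, by simp only; omega, rfl⟩)
  · rw [show braidSigma n b = 1 from dif_neg hb]
    exact Commute.one_right _

def braidSigmaDesc (n a b : ℕ) : BraidGroup n :=
  ((List.range (b - 1 - a)).map (fun t => braidSigma n (b - 1 - t))).prod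

theorem braidA_eq_conj (n a b : ℕ) :
    braidA n a b = MulAut.conj (braidSigmaDesc n a b) (braidSigma n a ^ 2) := rfl

theorem braidSigmaDesc_self_succ (n a : ℕ) : braidSigmaDesc n a (a + 1) = 1 := by
  simp [braidSigmaDesc]

theorem braidSigmaDesc_split {n p q r : ℕ} (hpq : p < q) (hqr : q < r) :
    braidSigmaDesc n p r = braidSigmaDesc n q r * braidSigma n q * braidSigmaDesc n p q := by
  unfold braidSigmaDesc
  rw [show r - 1 - p = (r - 1 - q + 1) + (q - 1 - p) by omega, List.range_add, List.range_succ]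
  simp only [List.map_append, List.prod_append, List.map_map, List.map_cons, List.map_nil,
    List.prod_cons, List.prod_nil, mul_one]
  congr 2
  · rw [show r - 1 - (r - 1 - q) = q by omega]
  · refine List.map_congr_left fun t ht => ?_
    rw [List.mem_range] at ht
    simp only [Function.comp_apply]
    congr 1
    omega

theorem braidSigmaDesc_commute_braidSigma {n a b j : ℕ} (hj : b + 1 ≤ j) :
    Commute (braidSigmaDesc n a b) (braidSigma n j) := by
  refine Commute.list_prod_left _ _ fun y hy => ?_
  obtain ⟨t, ht, rfl⟩ := List.mem_map.1 hy
  rw [List.mem_range] at ht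
  exact braidSigma_commute (by omega) (by omega)

theorem braidSigma_commute_braidA {n p q j : ℕ} (hp : 1 ≤ p) (hpq : p < q) (hj : q + 1 ≤ j) :
    Commute (braidSigma n j) (braidA n p q) := by
  have hW := (braidSigmaDesc_commute_braidSigma (n := n) (a := p) hj).symm
  have hσ : Commute (braidSigma n j) (braidSigma n p) := (braidSigma_commute hp (by omega)).symm
  rw [braidA_eq_conj, MulAut.conj_apply]
  exact (hW.mul_right (hσ.pow_right 2)).mul_right hW.inv_right

theorem braidSigmaDesc_commute_braidA {n p q r : ℕ} (hp : 1 ≤ p) (hpq : p < q) :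
    Commute (braidSigmaDesc n q r) (braidA n p q) := by
  refine Commute.list_prod_left _ _ fun y hy => ?_
  obtain ⟨t, ht, rfl⟩ := List.mem_map.1 hy
  rw [List.mem_range] at ht
  exact braidSigma_commute_braidA hp hpq (by omega)

theorem braidA_eq_conj_braidA {n p q r : ℕ} (hpq : p < q) (hqr : q < r) :
    braidA n p r =
      MulAut.conj (braidSigmaDesc n q r) (MulAut.conj (braidSigma n q) (braidA n p q)) := by
  rw [braidA_eq_conj, braidSigmaDesc_split hpq hqr, braidA_eq_conj, map_mul, map_mul]
  rfl

theorem braidA_succ_right {n p q : ℕ} (hpq : p < q) :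
    braidA n p (q + 1) = MulAut.conj (braidSigma n q) (braidA n p q) := by
  rw [braidA_eq_conj_braidA hpq (lt_add_one q), braidSigmaDesc_self_succ, map_one]
  rfl

theorem braidA_self_succ (n p : ℕ) : braidA n p (p + 1) = braidSigma n p ^ 2 := by
  rw [braidA_eq_conj, braidSigmaDesc_self_succ, map_one]
  rfl

theorem braidSigma_braidA_braid4 {n p q : ℕ} (hp : 1 ≤ p) (hpq : p < q) (hqn : q < n) :
    braidSigma n q * braidA n p q * braidSigma n q * braidA n p q =
      braidA n p q * braidSigma n q * braidA n p q * braidSigma n q := by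
  induction q, hpq using Nat.le_induction with
  | base =>
    rw [braidA_self_succ]
    exact sq_braid4_of_braid (braidSigma_braid hp (by omega))
  | succ q hpq ih =>
    rw [braidA_succ_right hpq, MulAut.conj_apply]
    exact conj_braid4_of_braid (braidSigma_braid (by omega) hqn)
      (braidSigma_commute_braidA hp hpq le_rfl) (ih (by omega))

theorem braid_pure_triple_general (n : ℕ) (p q r : ℕ)
    (hp : 1 ≤ p) (hpq : p < q) (hqr : q < r) (hr : r ≤ n) :
    braidA n p r * braidA n q r * braidA n p q =
      braidA n q r * braidA n p q * braidA n p r ∧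
    braidA n q r * braidA n p q * braidA n p r =
      braidA n p q * braidA n p r * braidA n q r := by
  have hconj : braidA n p q = MulAut.conj (braidSigmaDesc n q r) (braidA n p q) := by
    rw [MulAut.conj_apply, (braidSigmaDesc_commute_braidA hp hpq).eq, mul_inv_cancel_right]
  obtain ⟨h₁, h₂⟩ :=
    braid_triple_of_braid4 (braidSigma_braidA_braid4 (n := n) hp hpq (by omega))
  rw [hconj, braidA_eq_conj_braidA hpq hqr, braidA_eq_conj n q r,
    MulAut.conj_apply (braidSigma n q)]
  simp only [← map_mul]
  exact ⟨congrArg _ h₁, congrArg _ h₂⟩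

/-- In the braid group `B_n` (`n ≥ 2`), for `1 ≤ p < q < r ≤ n`,
`a_{pr} a_{qr} a_{pq} = a_{qr} a_{pq} a_{pr} = a_{pq} a_{pr} a_{qr}`. -/
theorem braid_pure_triple (n : ℕ) (hn : 2 ≤ n) (p q r : ℕ)
    (hp : 1 ≤ p) (hpq : p < q) (hqr : q < r) (hr : r ≤ n) :
    braidA n p r * braidA n q r * braidA n p q =
      braidA n q r * braidA n p q * braidA n p r ∧
    braidA n q r * braidA n p q * braidA n p r =
      braidA n p q * braidA n p r * braidA n q r :=
  braid_pure_triple_general n p q r hp hpq hqr hr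
end

section
/- In the braid group B_n (n ≥ 2), for all indices 1 ≤ p < q < r < s ≤ n, the pure braid generators satisfy [a_{rs} a_{pr} a_{rs}^{−1}, a_{qs}] = 1. -/
namespace BraidAux

variable {n : ℕ}

lemma rel_eq_one {r : FreeGroup (Fin (n - 1))} (h : r ∈ braidRels n) :
    PresentedGroup.mk (braidRels n) r = 1 :=
  (QuotientGroup.eq_one_iff r).mpr (Subgroup.subset_normalClosure h)

lemma mk_of (x : Fin (n - 1)) :
    PresentedGroup.mk (braidRels n) (FreeGroup.of x) = PresentedGroup.of x := rfl

lemma of_braid {i j : Fin (n - 1)} (h : (i : ℕ) + 1 = (j : ℕ)) :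
    (PresentedGroup.of i : BraidGroup n) * PresentedGroup.of j * PresentedGroup.of i =
      PresentedGroup.of j * PresentedGroup.of i * PresentedGroup.of j := by
  have hr : FreeGroup.of i * FreeGroup.of j * FreeGroup.of i *
      (FreeGroup.of j * FreeGroup.of i * FreeGroup.of j)⁻¹ ∈ braidRels n :=
    Or.inl ⟨i, j, h, rfl⟩
  have h1 := rel_eq_one hr
  rw [map_mul, map_mul, map_mul, map_inv, map_mul, map_mul, mk_of, mk_of] at h1
  exact mul_inv_eq_one.mp h1

lemma of_comm {i j : Fin (n - 1)} (h : (i : ℕ) + 2 ≤ (j : ℕ)) :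
    (PresentedGroup.of i : BraidGroup n) * PresentedGroup.of j =
      PresentedGroup.of j * PresentedGroup.of i := by
  have hr : FreeGroup.of i * FreeGroup.of j * (FreeGroup.of j * FreeGroup.of i)⁻¹ ∈
      braidRels n := Or.inr ⟨i, j, h, rfl⟩
  have h1 := rel_eq_one hr
  rw [map_mul, map_mul, map_inv, map_mul, mk_of, mk_of] at h1
  exact mul_inv_eq_one.mp h1

lemma sigma_def {k : ℕ} (h1 : 1 ≤ k) (h2 : k + 1 ≤ n) :
    braidSigma n k = PresentedGroup.of (⟨k - 1, by omega⟩ : Fin (n - 1)) := by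
  rw [braidSigma, dif_pos]

lemma sigma_one {k : ℕ} (h : n ≤ k) : braidSigma n k = 1 := by
  rw [braidSigma, dif_neg (by omega)]

lemma sigma_comm {i k : ℕ} (hi : 1 ≤ i) (h : i + 2 ≤ k) :
    Commute (braidSigma n i) (braidSigma n k) := by
  by_cases hk : k + 1 ≤ n
  · rw [sigma_def hi (by omega), sigma_def (by omega) hk]
    exact of_comm (by simp; omega)
  · rw [show braidSigma n k = 1 from sigma_one (by omega)]
    exact Commute.one_right _

lemma braid_rel {k : ℕ} (h1 : 1 ≤ k) (h2 : k + 2 ≤ n) :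
    braidSigma n k * braidSigma n (k + 1) * braidSigma n k =
      braidSigma n (k + 1) * braidSigma n k * braidSigma n (k + 1) := by
  rw [sigma_def h1 (by omega), sigma_def (by omega) h2]
  exact of_braid (by simp; omega)

/-- `P n i j = σ_{j-1} σ_{j-2} ⋯ σ_i` (empty product if `j ≤ i`). -/
def P (n i j : ℕ) : BraidGroup n :=
  ((List.range (j - i)).map (fun t => braidSigma n (j - 1 - t))).prod

lemma braidA_eq (i j : ℕ) :
    braidA n i j = P n (i + 1) j * (braidSigma n i) ^ 2 * (P n (i + 1) j)⁻¹ := by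
  have h : j - 1 - i = j - (i + 1) := by omega
  rw [braidA, P, h]

lemma P_left {a b : ℕ} (h : a < b) :
    P n a b = braidSigma n (b - 1) * P n a (b - 1) := by
  have hb : b - a = (b - 1 - a) + 1 := by omega
  rw [P, hb, List.range_succ_eq_map, List.map_cons, List.prod_cons, List.map_map]
  rw [show b - 1 - 0 = b - 1 by omega, P]
  have hf : ((fun t => braidSigma n (b - 1 - t)) ∘ Nat.succ) =
      (fun t => braidSigma n (b - 1 - 1 - t)) := by
    funext t
    simp only [Function.comp_apply]
    congr 1
    omega
  rw [hf]

lemma P_right {a b : ℕ} (h : a < b) :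
    P n a b = P n (a + 1) b * braidSigma n a := by
  have hb : b - a = (b - (a + 1)) + 1 := by omega
  rw [P, hb, List.range_succ, List.map_append, List.prod_append, List.map_singleton,
    List.prod_singleton]
  rw [P, show b - 1 - (b - (a + 1)) = a by omega]

lemma comm_P_lo {k a b : ℕ} (hk : 1 ≤ k) (h : k + 2 ≤ a) :
    Commute (braidSigma n k) (P n a b) := by
  refine Commute.list_prod_right _ _ ?_
  intro x hx
  obtain ⟨t, ht, rfl⟩ := List.mem_map.mp hx
  rw [List.mem_range] at ht
  have hb : a + t + 1 ≤ b := by omega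
  exact sigma_comm hk (by omega)

lemma comm_P_hi {k a b : ℕ} (ha : 1 ≤ a) (h : b + 1 ≤ k) :
    Commute (braidSigma n k) (P n a b) := by
  refine Commute.list_prod_right _ _ ?_
  intro x hx
  obtain ⟨t, ht, rfl⟩ := List.mem_map.mp hx
  rw [List.mem_range] at ht
  have hb : a + t + 1 ≤ b := by omega
  exact (sigma_comm (i := b - 1 - t) (k := k) (by omega) (by omega)).symm

lemma commA_lo {k i j : ℕ} (hk : 1 ≤ k) (h : k + 2 ≤ i) :
    Commute (braidSigma n k) (braidA n i j) := by
  rw [braidA_eq]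
  have h1 : Commute (braidSigma n k) (P n (i + 1) j) := comm_P_lo hk (by omega)
  have h2 : Commute (braidSigma n k) ((braidSigma n i) ^ 2) :=
    (sigma_comm hk h).pow_right 2
  exact (h1.mul_right h2).mul_right h1.inv_right

lemma commA_hi {k i j : ℕ} (hi : 1 ≤ i) (hij : i < j) (h : j + 1 ≤ k) :
    Commute (braidSigma n k) (braidA n i j) := by
  rw [braidA_eq]
  have h1 : Commute (braidSigma n k) (P n (i + 1) j) := comm_P_hi (by omega) (by omega)
  have h2 : Commute (braidSigma n k) ((braidSigma n i) ^ 2) :=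
    ((sigma_comm hi (by omega)).symm).pow_right 2
  exact (h1.mul_right h2).mul_right h1.inv_right

/-- `a_{ij} = σ_{j-1} a_{i,j-1} σ_{j-1}⁻¹`. -/
lemma R1 {i j : ℕ} (h : i + 2 ≤ j) :
    braidA n i j = braidSigma n (j - 1) * braidA n i (j - 1) * (braidSigma n (j - 1))⁻¹ := by
  rw [braidA_eq, braidA_eq, P_left (show i + 1 < j by omega)]
  group

/-- `a_{ij} = σ_i⁻¹ a_{i+1,j} σ_i`. -/
lemma R2 {i j : ℕ} (hi : 1 ≤ i) (h : i + 2 ≤ j) (hn : j ≤ n) :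
    braidA n i j = (braidSigma n i)⁻¹ * braidA n (i + 1) j * braidSigma n i := by
  rw [braidA_eq, braidA_eq, P_right (show i + 1 < j by omega)]
  set a := braidSigma n i with ha
  set b := braidSigma n (i + 1) with hb
  have hbr : a * b * a = b * a * b := braid_rel hi (by omega)
  have key : b * a ^ 2 * b⁻¹ = a⁻¹ * b ^ 2 * a := by
    rw [pow_two, pow_two]
    symm
    calc a⁻¹ * (b * b) * a
        = a⁻¹ * b * (b * a * b) * b⁻¹ := by group
      _ = a⁻¹ * b * (a * b * a) * b⁻¹ := by rw [← hbr]
      _ = a⁻¹ * (b * a * b) * (a * b⁻¹) := by group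
      _ = a⁻¹ * (a * b * a) * (a * b⁻¹) := by rw [← hbr]
      _ = b * (a * a) * b⁻¹ := by group
  have hc : Commute a (P n (i + 1 + 1) j) := comm_P_lo hi (by omega)
  rw [pow_two, pow_two] at key ⊢
  calc P n (i + 1 + 1) j * b * (a * a) * (P n (i + 1 + 1) j * b)⁻¹
      = P n (i + 1 + 1) j * (b * (a * a) * b⁻¹) * (P n (i + 1 + 1) j)⁻¹ := by group
    _ = P n (i + 1 + 1) j * (a⁻¹ * (b * b) * a) * (P n (i + 1 + 1) j)⁻¹ := by rw [key]
    _ = (P n (i + 1 + 1) j * a⁻¹) * (b * b) * (a * (P n (i + 1 + 1) j)⁻¹) := by group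
    _ = (a⁻¹ * P n (i + 1 + 1) j) * (b * b) * ((P n (i + 1 + 1) j)⁻¹ * a) := by
        rw [hc.inv_left.eq, (hc.inv_right.eq).symm]
    _ = a⁻¹ * (P n (i + 1 + 1) j * (b * b) * (P n (i + 1 + 1) j)⁻¹) * a := by group

lemma commA_base {i : ℕ} (hi : 1 ≤ i) (hn : i + 3 ≤ n) :
    Commute (braidSigma n (i + 1)) (braidA n i (i + 3)) := by
  have h0 : P n (i + 1) (i + 1) = 1 := by
    rw [P]; simp
  have hP : P n (i + 1) (i + 3) = braidSigma n (i + 2) * braidSigma n (i + 1) := by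
    rw [P_left (show i + 1 < i + 3 by omega), show i + 3 - 1 = i + 2 by omega,
      P_left (show i + 1 < i + 2 by omega), show i + 2 - 1 = i + 1 by omega, h0, mul_one]
  rw [braidA_eq, hP, pow_two]
  set a := braidSigma n i with ha
  set b := braidSigma n (i + 1) with hb
  set c := braidSigma n (i + 2) with hc
  have hbc : b * c * b = c * b * c := braid_rel (by omega) (by omega)
  have hac : Commute a c := sigma_comm hi (by omega)
  have hinv : b⁻¹ * c⁻¹ * b⁻¹ = c⁻¹ * b⁻¹ * c⁻¹ := by
    have := congrArg (·⁻¹) hbc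
    simpa [mul_assoc] using this
  have e2 : c * b⁻¹ * c⁻¹ = b⁻¹ * c⁻¹ * b := by
    calc c * b⁻¹ * c⁻¹ = c * (b⁻¹ * c⁻¹ * b⁻¹) * b := by group
      _ = c * (c⁻¹ * b⁻¹ * c⁻¹) * b := by rw [hinv]
      _ = b⁻¹ * c⁻¹ * b := by group
  have hca : c * (a * a) = (a * a) * c := ((hac.symm).mul_right hac.symm).eq
  show b * (c * b * (a * a) * (c * b)⁻¹) = (c * b * (a * a) * (c * b)⁻¹) * b
  calc b * (c * b * (a * a) * (c * b)⁻¹)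
      = (b * c * b) * ((a * a) * (b⁻¹ * c⁻¹)) := by group
    _ = (c * b * c) * ((a * a) * (b⁻¹ * c⁻¹)) := by rw [hbc]
    _ = c * b * (c * (a * a)) * (b⁻¹ * c⁻¹) := by group
    _ = c * b * ((a * a) * c) * (b⁻¹ * c⁻¹) := by rw [hca]
    _ = c * b * (a * a) * (c * b⁻¹ * c⁻¹) := by group
    _ = c * b * (a * a) * (b⁻¹ * c⁻¹ * b) := by rw [e2]
    _ = (c * b * (a * a) * (c * b)⁻¹) * b := by group

lemma commA_mid {i j : ℕ} (hi : 1 ≤ i) (hij : i + 3 ≤ j) (hn : j ≤ n) :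
    Commute (braidSigma n (i + 1)) (braidA n i j) := by
  induction j, hij using Nat.le_induction with
  | base => exact commA_base hi hn
  | succ j hj ih =>
    rw [R1 (show i + 2 ≤ j + 1 by omega)]
    have h1 : Commute (braidSigma n (i + 1)) (braidSigma n (j + 1 - 1)) :=
      sigma_comm (by omega) (by omega)
    have h2 : Commute (braidSigma n (i + 1)) (braidA n i (j + 1 - 1)) := by
      have e : j + 1 - 1 = j := by omega
      rw [e]
      exact ih (by omega)
    exact (h1.mul_right h2).mul_right h1.inv_right

lemma commA_aux (d : ℕ) : ∀ i k j : ℕ, 1 ≤ i → k = i + 1 + d → k + 2 ≤ j → j ≤ n →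
    Commute (braidSigma n k) (braidA n i j) := by
  induction d with
  | zero =>
    intro i k j h1 h2 h3 h4
    subst h2
    exact commA_mid h1 (by omega) h4
  | succ d ih =>
    intro i k j h1 h2 h3 h4
    rw [R2 h1 (by omega) h4]
    have h5 : Commute (braidSigma n k) (braidSigma n i) :=
      (sigma_comm h1 (by omega)).symm
    have h6 := ih (i + 1) k j (by omega) (by omega) h3 h4
    exact (h5.inv_right.mul_right h6).mul_right h5

/-- Interior commutation: `σ_k` commutes with `a_{ij}` for `i+1 ≤ k ≤ j-2`. -/
lemma commA {k i j : ℕ} (hi : 1 ≤ i) (hk1 : i + 1 ≤ k) (hk2 : k + 2 ≤ j) (hj : j ≤ n) :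
    Commute (braidSigma n k) (braidA n i j) :=
  commA_aux (k - (i + 1)) i k j hi (by omega) hk2 hj

lemma conj_comm {G : Type*} [Group G] {w v : G} (h : Commute w v) (g : G) :
    Commute (g * w * g⁻¹) (g * v * g⁻¹) := by
  show _ = _
  calc g * w * g⁻¹ * (g * v * g⁻¹) = g * (w * v) * g⁻¹ := by group
    _ = g * (v * w) * g⁻¹ := by rw [h.eq]
    _ = g * v * g⁻¹ * (g * w * g⁻¹) := by group

lemma braidA_adj (i : ℕ) : braidA n i (i + 1) = (braidSigma n i) ^ 2 := by
  rw [braidA]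
  simp

lemma main_aux (N : ℕ) : ∀ p q r s : ℕ, 1 ≤ p → p < q → q < r → r < s → s ≤ n →
    s + r + (q - p) ≤ N →
    Commute (braidA n r s * braidA n p r * (braidA n r s)⁻¹) (braidA n q s) := by
  induction N with
  | zero => intro p q r s h1 h2 h3 h4 h5 h6; omega
  | succ N ih =>
    intro p q r s h1 h2 h3 h4 h5 h6
    by_cases hrq : q + 1 < r
    · -- reduce r
      set g := braidSigma n (r - 1) with hg
      have e1 : braidA n r s = g * braidA n (r - 1) s * g⁻¹ := by
        have := R2 (show 1 ≤ r - 1 by omega) (show r - 1 + 2 ≤ s by omega) h5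
        have er : r - 1 + 1 = r := by omega
        rw [er] at this
        rw [this]
        rw [hg]
        group
      have e2 : braidA n p r = g * braidA n p (r - 1) * g⁻¹ := R1 (by omega)
      have e3 : Commute g (braidA n q s) :=
        commA (by omega) (by omega) (by omega) h5
      have ih' := ih p q (r - 1) s h1 h2 (by omega) (by omega) h5 (by omega)
      have eX : braidA n r s * braidA n p r * (braidA n r s)⁻¹ =
          g * (braidA n (r - 1) s * braidA n p (r - 1) * (braidA n (r - 1) s)⁻¹) * g⁻¹ := by
        rw [e1, e2]
        group
      rw [eX]
      exact ((e3.mul_left ih').mul_left e3.inv_left).symm.symm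
    · by_cases hsr : r + 1 < s
      · -- reduce s
        set g := braidSigma n (s - 1) with hg
        have e1 : braidA n r s = g * braidA n r (s - 1) * g⁻¹ := R1 (by omega)
        have e2 : braidA n q s = g * braidA n q (s - 1) * g⁻¹ := R1 (by omega)
        have e3 : Commute g (braidA n p r) := commA_hi h1 (by omega) (by omega)
        have ih' := ih p q r (s - 1) h1 h2 h3 (by omega) (by omega) (by omega)
        have eX : braidA n r s * braidA n p r * (braidA n r s)⁻¹ =
            g * (braidA n r (s - 1) * braidA n p r * (braidA n r (s - 1))⁻¹) * g⁻¹ := by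
          rw [e1]
          have h7 : g⁻¹ * braidA n p r * g = braidA n p r := by
            rw [e3.inv_left.eq]
            group
          calc g * braidA n r (s - 1) * g⁻¹ * braidA n p r *
                (g * braidA n r (s - 1) * g⁻¹)⁻¹
              = g * braidA n r (s - 1) * (g⁻¹ * braidA n p r * g) *
                (braidA n r (s - 1))⁻¹ * g⁻¹ := by group
            _ = g * braidA n r (s - 1) * braidA n p r * (braidA n r (s - 1))⁻¹ * g⁻¹ := by
                rw [h7]
            _ = g * (braidA n r (s - 1) * braidA n p r * (braidA n r (s - 1))⁻¹) * g⁻¹ := by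
                group
        rw [eX, e2]
        exact conj_comm ih' g
      · by_cases hpq : p + 1 < q
        · -- reduce p
          set g := braidSigma n p with hg
          have e1 : braidA n p r = g⁻¹ * braidA n (p + 1) r * g :=
            R2 h1 (by omega) (by omega)
          have e2 : Commute g (braidA n r s) := commA_lo h1 (by omega)
          have e3 : Commute g (braidA n q s) := commA_lo h1 (by omega)
          have ih' := ih (p + 1) q r s (by omega) (by omega) h3 h4 h5 (by omega)
          have eX : braidA n r s * braidA n p r * (braidA n r s)⁻¹ =
              g⁻¹ * (braidA n r s * braidA n (p + 1) r * (braidA n r s)⁻¹) * g := by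
            rw [e1]
            have h7 : braidA n r s * g⁻¹ = g⁻¹ * braidA n r s := e2.inv_left.eq.symm
            calc braidA n r s * (g⁻¹ * braidA n (p + 1) r * g) * (braidA n r s)⁻¹
                = (braidA n r s * g⁻¹) * braidA n (p + 1) r * (g * (braidA n r s)⁻¹) := by
                  group
              _ = (g⁻¹ * braidA n r s) * braidA n (p + 1) r * ((braidA n r s)⁻¹ * g) := by
                  rw [h7, e2.inv_right.eq]
              _ = g⁻¹ * (braidA n r s * braidA n (p + 1) r * (braidA n r s)⁻¹) * g := by
                  group
          rw [eX]
          show _ = _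
          calc g⁻¹ * (braidA n r s * braidA n (p + 1) r * (braidA n r s)⁻¹) * g *
                braidA n q s
              = g⁻¹ * ((braidA n r s * braidA n (p + 1) r * (braidA n r s)⁻¹) *
                (g * braidA n q s * g⁻¹)) * g := by group
            _ = g⁻¹ * ((braidA n r s * braidA n (p + 1) r * (braidA n r s)⁻¹) *
                braidA n q s) * g := by rw [show g * braidA n q s * g⁻¹ = braidA n q s by
                  rw [e3.eq]; group]
            _ = g⁻¹ * (braidA n q s *
                (braidA n r s * braidA n (p + 1) r * (braidA n r s)⁻¹)) * g := by
                  rw [ih'.eq]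
            _ = g⁻¹ * ((g * braidA n q s * g⁻¹) *
                (braidA n r s * braidA n (p + 1) r * (braidA n r s)⁻¹)) * g := by
                  rw [show g * braidA n q s * g⁻¹ = braidA n q s by rw [e3.eq]; group]
            _ = braidA n q s *
                (g⁻¹ * (braidA n r s * braidA n (p + 1) r * (braidA n r s)⁻¹) * g) := by
                  group
        · -- base case: q = p + 1, r = q + 1, s = q + 2
          have hq : q = p + 1 := by omega
          have hr : r = q + 1 := by omega
          have hs : s = q + 2 := by omega
          subst hq hr hs
          have h2q : 2 ≤ p + 1 := by omega
          set b := braidSigma n (p + 1) with hb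
          set c := braidSigma n (p + 1 + 1) with hc
          have ers : braidA n (p + 1 + 1) (p + 1 + 2) = c * c := by
            have := braidA_adj (n := n) (p + 1 + 1)
            rw [show p + 1 + 1 + 1 = p + 1 + 2 by omega, pow_two] at this
            exact this
          have eadj : braidA n (p + 1) (p + 1 + 1) = b * b := by
            rw [braidA_adj, pow_two]
          have eqs : braidA n (p + 1) (p + 1 + 2) = c * (b * b) * c⁻¹ := by
            rw [R1 (show p + 1 + 2 ≤ p + 1 + 2 by omega)]
            have e : p + 1 + 2 - 1 = p + 1 + 1 := by omega
            rw [e, eadj]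
          have epr : braidA n p (p + 1 + 2) = c * braidA n p (p + 1 + 1) * c⁻¹ := by
            rw [R1 (show p + 2 ≤ p + 1 + 2 by omega)]
            have e : p + 1 + 2 - 1 = p + 1 + 1 := by omega
            rw [e]
          have hcomm : Commute (braidSigma n (p + 1)) (braidA n p (p + 1 + 2)) :=
            commA h1 (by omega) (by omega) h5
          have hcomm2 : Commute (braidA n p (p + 1 + 2)) (b * b) :=
            (hcomm.mul_left hcomm).symm
          have eX : braidA n (p + 1 + 1) (p + 1 + 2) * braidA n p (p + 1 + 1) *
              (braidA n (p + 1 + 1) (p + 1 + 2))⁻¹ =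
              c * braidA n p (p + 1 + 2) * c⁻¹ := by
            rw [ers, epr]
            group
          rw [eX, eqs]
          exact conj_comm hcomm2 c

end BraidAux

/-- In the braid group `B_n` (`n ≥ 2`), for `1 ≤ p < q < r < s ≤ n`,
`[a_{rs} a_{pr} a_{rs}⁻¹, a_{qs}] = 1`. -/
theorem braid_pure_conj_commutation (n : ℕ) (hn : 2 ≤ n) (p q r s : ℕ)
    (hp : 1 ≤ p) (hpq : p < q) (hqr : q < r) (hrs : r < s) (hs : s ≤ n) :
    (braidA n r s * braidA n p r * (braidA n r s)⁻¹) * braidA n q s *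
      (braidA n r s * braidA n p r * (braidA n r s)⁻¹)⁻¹ * (braidA n q s)⁻¹ = 1 := by
  have h := BraidAux.main_aux (n := n) (s + r + (q - p)) p q r s hp hpq hqr hrs hs le_rfl
  rw [h.eq]
  group
end

section
/- In the braid group B_n (n ≥ 2), the full twist decomposes as a product of pure braid generators: (σ_1 σ_2 ⋯ σ_{n−1})^n = (a_{12} a_{13} ⋯ a_{1n}) (a_{23} a_{24} ⋯ a_{2n}) ⋯ (a_{n−2,n−1} a_{n−2,n}) (a_{n−1,n}), i.e., (σ_1 ⋯ σ_{n−1})^n = ∏_{i=1}^{n−1} ( ∏_{j=i+1}^{n} a_{ij} ) with the factors taken in increasing order of i and, within each i, increasing order of j. -/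
namespace BraidPf
variable {n : ℕ}

lemma rel_eq_one {r : FreeGroup (Fin (n-1))} (hr : r ∈ braidRels n) :
    (QuotientGroup.mk r : BraidGroup n) = 1 :=
  (QuotientGroup.eq_one_iff r).mpr (Subgroup.subset_normalClosure hr)

lemma sigma_eq (k : ℕ) (h : k - 1 < n - 1) :
    braidSigma n k = PresentedGroup.of (⟨k - 1, h⟩ : Fin (n - 1)) := dif_pos h

lemma sigma_out (k : ℕ) (h : ¬ (k - 1 < n - 1)) : braidSigma n k = 1 := dif_neg h

lemma braid_rel (k : ℕ) (h1 : 1 ≤ k) (h2 : k + 1 ≤ n - 1) :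
    braidSigma n k * braidSigma n (k+1) * braidSigma n k
      = braidSigma n (k+1) * braidSigma n k * braidSigma n (k+1) := by
  have hk : k - 1 < n - 1 := by omega
  have hk1 : (k+1) - 1 < n - 1 := by omega
  rw [sigma_eq k hk, sigma_eq (k+1) hk1]
  set i : Fin (n-1) := ⟨k-1, hk⟩
  set j : Fin (n-1) := ⟨(k+1)-1, hk1⟩
  have hmem : (FreeGroup.of i * FreeGroup.of j * FreeGroup.of i *
      (FreeGroup.of j * FreeGroup.of i * FreeGroup.of j)⁻¹) ∈ braidRels n :=
    Or.inl ⟨i, j, by simp [i, j]; omega, rfl⟩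
  have h1 := rel_eq_one hmem
  have : (PresentedGroup.of i * PresentedGroup.of j * PresentedGroup.of i *
      (PresentedGroup.of j * PresentedGroup.of i * PresentedGroup.of j)⁻¹ : BraidGroup n) = 1 := by
    have h2 : PresentedGroup.mk (braidRels n) (FreeGroup.of i * FreeGroup.of j * FreeGroup.of i *
        (FreeGroup.of j * FreeGroup.of i * FreeGroup.of j)⁻¹) = 1 := h1
    simpa [PresentedGroup.of] using h2
  exact mul_inv_eq_one.mp this

lemma comm_rel (k l : ℕ) (h1 : 1 ≤ k) (h2 : k + 2 ≤ l) :
    braidSigma n k * braidSigma n l = braidSigma n l * braidSigma n k := by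
  by_cases hl : l - 1 < n - 1
  · have hk : k - 1 < n - 1 := by omega
    rw [sigma_eq k hk, sigma_eq l hl]
    set i : Fin (n-1) := ⟨k-1, hk⟩
    set j : Fin (n-1) := ⟨l-1, hl⟩
    have hmem : (FreeGroup.of i * FreeGroup.of j *
        (FreeGroup.of j * FreeGroup.of i)⁻¹) ∈ braidRels n :=
      Or.inr ⟨i, j, by simp [i, j]; omega, rfl⟩
    have h1 := rel_eq_one hmem
    have : (PresentedGroup.of i * PresentedGroup.of j *
        (PresentedGroup.of j * PresentedGroup.of i)⁻¹ : BraidGroup n) = 1 := by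
      have h2 : PresentedGroup.mk (braidRels n) (FreeGroup.of i * FreeGroup.of j *
          (FreeGroup.of j * FreeGroup.of i)⁻¹) = 1 := h1
      simpa [PresentedGroup.of] using h2
    exact mul_inv_eq_one.mp this
  · rw [sigma_out l hl, mul_one, one_mul]

/-- `σ_a σ_{a+1} ⋯ σ_{a+l-1}` -/
def ascL (n : ℕ) : ℕ → ℕ → BraidGroup n
  | _, 0 => 1
  | a, (l+1) => braidSigma n a * ascL n (a+1) l

/-- `σ_{a+l-1} ⋯ σ_{a+1} σ_a` -/
def dscL (n : ℕ) : ℕ → ℕ → BraidGroup n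
  | _, 0 => 1
  | a, (l+1) => dscL n (a+1) l * braidSigma n a

lemma ascL_snoc (a l : ℕ) : ascL n a (l+1) = ascL n a l * braidSigma n (a+l) := by
  induction l generalizing a with
  | zero => simp [ascL]
  | succ l ih =>
      calc ascL n a (l+1+1) = braidSigma n a * ascL n (a+1) (l+1) := rfl
        _ = braidSigma n a * (ascL n (a+1) l * braidSigma n (a+1+l)) := by rw [ih]
        _ = (braidSigma n a * ascL n (a+1) l) * braidSigma n (a+1+l) := by rw [mul_assoc]
        _ = ascL n a (l+1) * braidSigma n (a+(l+1)) := by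
              rw [show a+1+l = a+(l+1) by omega]; rfl

lemma dscL_top (a l : ℕ) : dscL n a (l+1) = braidSigma n (a+l) * dscL n a l := by
  induction l generalizing a with
  | zero => simp [dscL]
  | succ l ih =>
      calc dscL n a (l+1+1) = dscL n (a+1) (l+1) * braidSigma n a := rfl
        _ = (braidSigma n (a+1+l) * dscL n (a+1) l) * braidSigma n a := by rw [ih]
        _ = braidSigma n (a+1+l) * (dscL n (a+1) l * braidSigma n a) := by rw [mul_assoc]
        _ = braidSigma n (a+(l+1)) * dscL n a (l+1) := by
              rw [show a+1+l = a+(l+1) by omega]; rfl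

lemma ascL_split (a l₁ l₂ : ℕ) :
    ascL n a (l₁ + l₂) = ascL n a l₁ * ascL n (a + l₁) l₂ := by
  induction l₁ generalizing a with
  | zero => simp [ascL]
  | succ l ih =>
      rw [show l+1+l₂ = (l+l₂)+1 by omega]
      calc ascL n a ((l+l₂)+1) = braidSigma n a * ascL n (a+1) (l+l₂) := rfl
        _ = braidSigma n a * (ascL n (a+1) l * ascL n (a+1+l) l₂) := by rw [ih]
        _ = (braidSigma n a * ascL n (a+1) l) * ascL n (a+1+l) l₂ := by rw [mul_assoc]
        _ = ascL n a (l+1) * ascL n (a+(l+1)) l₂ := by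
              rw [show a+1+l = a+(l+1) by omega]; rfl

lemma comm_ascL_high (j a l : ℕ) (hj : 1 ≤ j) (h : j + 2 ≤ a) :
    braidSigma n j * ascL n a l = ascL n a l * braidSigma n j := by
  induction l generalizing a with
  | zero => simp [ascL]
  | succ l ih =>
      rw [ascL, ← mul_assoc, comm_rel j a hj h, mul_assoc, ih (a+1) (by omega), mul_assoc]

lemma comm_ascL_low (j a l : ℕ) (ha : 1 ≤ a) (h : a + l + 1 ≤ j) :
    braidSigma n j * ascL n a l = ascL n a l * braidSigma n j := by
  induction l generalizing a with
  | zero => simp [ascL]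
  | succ l ih =>
      rw [ascL, ← mul_assoc, ← comm_rel a j ha (by omega), mul_assoc,
        ih (a+1) (by omega) (by omega), mul_assoc]

lemma comm_dscL_high (j a l : ℕ) (hj : 1 ≤ j) (h : j + 2 ≤ a) :
    braidSigma n j * dscL n a l = dscL n a l * braidSigma n j := by
  induction l generalizing a with
  | zero => simp [dscL]
  | succ l ih =>
      rw [dscL, ← mul_assoc, ih (a+1) (by omega), mul_assoc, comm_rel j a hj h, mul_assoc]

lemma comm_dscL_low (j a l : ℕ) (ha : 1 ≤ a) (h : a + l + 1 ≤ j) :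
    braidSigma n j * dscL n a l = dscL n a l * braidSigma n j := by
  induction l generalizing a with
  | zero => simp [dscL]
  | succ l ih =>
      rw [dscL, ← mul_assoc, ih (a+1) (by omega) (by omega), mul_assoc,
        ← comm_rel a j ha (by omega), mul_assoc]

/-- shift-up conjugation: `(σ_a ⋯ σ_{a+l-1}) σ_j = σ_{j+1} (σ_a ⋯ σ_{a+l-1})`. -/
lemma conjA (a l j : ℕ) (ha : 1 ≤ a) (haj : a ≤ j) (hjl : j + 2 ≤ a + l) (hjn : j + 2 ≤ n) :
    ascL n a l * braidSigma n j = braidSigma n (j+1) * ascL n a l := by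
  obtain ⟨r, hr⟩ : ∃ r, l = (j - a) + (2 + r) := ⟨a + l - j - 2, by omega⟩
  subst hr
  rw [ascL_split a (j-a) (2+r)]
  have hja : a + (j - a) = j := by omega
  rw [hja]
  rw [show (2+r) = (r+1)+1 by omega, ascL, ascL]
  have hbr := braid_rel (n := n) j (by omega) (by omega)
  have c1 : braidSigma n j * ascL n (j+1+1) r = ascL n (j+1+1) r * braidSigma n j :=
    comm_ascL_high j (j+1+1) r (by omega) (by omega)
  have c2 : braidSigma n (j+1) * ascL n a (j-a) = ascL n a (j-a) * braidSigma n (j+1) :=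
    comm_ascL_low (j+1) a (j-a) ha (by omega)
  set R := ascL n (j+1+1) r with hR
  set A := ascL n a (j-a) with hA
  set s0 := braidSigma n j with hs0
  set s1 := braidSigma n (j+1) with hs1
  calc (A * (s0 * (s1 * R))) * s0
      = A * (s0 * s1 * (R * s0)) := by simp only [mul_assoc]
    _ = A * (s0 * s1 * (s0 * R)) := by rw [← c1]
    _ = A * (s0 * s1 * s0) * R := by simp only [mul_assoc]
    _ = A * (s1 * s0 * s1) * R := by rw [hbr]
    _ = (A * s1) * (s0 * (s1 * R)) := by simp only [mul_assoc]
    _ = (s1 * A) * (s0 * (s1 * R)) := by rw [← c2]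
    _ = s1 * (A * (s0 * (s1 * R))) := by simp only [mul_assoc]

lemma conjA_pow (a l j k : ℕ) (ha : 1 ≤ a) (haj : a ≤ j) (hjl : j + k + 1 ≤ a + l)
    (hjn : j + k + 1 ≤ n) :
    (ascL n a l)^k * braidSigma n j = braidSigma n (j+k) * (ascL n a l)^k := by
  induction k generalizing j with
  | zero => simp
  | succ k ih =>
      rw [pow_succ, mul_assoc, conjA a l j ha haj (by omega) (by omega), ← mul_assoc,
        ih (j+1) (by omega) (by omega) (by omega), mul_assoc]
      congr 2
      omega

lemma dscL_one (a : ℕ) : dscL n a 1 = braidSigma n a := by simp [dscL]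

lemma swap_inv {G : Type*} [Group G] {A s t : G} (h : A * s = t * A) : A * s⁻¹ = t⁻¹ * A := by
  calc A * s⁻¹ = t⁻¹ * (t * A) * s⁻¹ := by group
    _ = t⁻¹ * (A * s) * s⁻¹ := by rw [h]
    _ = t⁻¹ * A := by group

/-- `σ_i δ' σ_i = σ_{i+1} σ_i δ'` where `δ' = σ_{i+1} ⋯ σ_{n-1}`. -/
lemma tau_base (i : ℕ) (h1 : 1 ≤ i) (h2 : i + 1 ≤ n - 1) :
    braidSigma n i * ascL n (i+1) (n-i-1) * braidSigma n i
      = braidSigma n (i+1) * braidSigma n i * ascL n (i+1) (n-i-1) := by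
  have hlen : n - i - 1 = 1 + (n-i-2) := by omega
  rw [hlen, ascL_split (i+1) 1 (n-i-2)]
  have hT : braidSigma n i * ascL n (i+1+1) (n-i-2) = ascL n (i+1+1) (n-i-2) * braidSigma n i :=
    comm_ascL_high i (i+1+1) (n-i-2) h1 (by omega)
  have hbr := braid_rel (n := n) i h1 h2
  have ha1 : ascL n (i+1) 1 = braidSigma n (i+1) := by simp [ascL]
  rw [ha1]
  set s0 := braidSigma n i
  set s1 := braidSigma n (i+1)
  set T := ascL n (i+1+1) (n-i-2)
  calc s0 * (s1 * T) * s0 = (s0 * s1) * (T * s0) := by simp only [mul_assoc]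
    _ = (s0 * s1) * (s0 * T) := by rw [← hT]
    _ = (s0 * s1 * s0) * T := by simp only [mul_assoc]
    _ = (s1 * s0 * s1) * T := by rw [hbr]
    _ = s1 * s0 * (s1 * T) := by simp only [mul_assoc]

/-- `(σ_{i+k-1}⋯σ_i)(σ_{i+1}⋯σ_{n-1})^k σ_i = σ_{i+k} (σ_{i+k-1}⋯σ_i)(σ_{i+1}⋯σ_{n-1})^k`. -/
lemma tau (i : ℕ) (h1 : 1 ≤ i) : ∀ k, 1 ≤ k → i + k ≤ n - 1 →
    dscL n i k * (ascL n (i+1) (n-i-1))^k * braidSigma n i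
      = braidSigma n (i+k) * (dscL n i k * (ascL n (i+1) (n-i-1))^k) := by
  intro k
  induction k with
  | zero => omega
  | succ k ih =>
      intro hk h
      rcases Nat.lt_or_ge k 1 with hk0 | hkk
      · have hk0 : k = 0 := by omega
        subst hk0
        simpa [dscL_one, mul_assoc] using tau_base (n := n) i h1 (by omega)
      · have ihk := ih hkk (by omega)
        set D := dscL n i k with hD
        set δ := ascL n (i+1) (n-i-1) with hδ
        set s0 := braidSigma n i with hs0
        set t := braidSigma n (i+k) with ht
        set u := braidSigma n (i+1) with hu
        have hbase := tau_base (n := n) i h1 (by omega)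
        have hbase' : δ * s0 = s0⁻¹ * (u * (s0 * δ)) := by
          rw [show u * (s0 * δ) = u * s0 * δ by simp only [mul_assoc], ← hbase]
          rw [hs0, hδ]; simp only [mul_assoc, inv_mul_cancel_left]
        have hinv : (D * δ^k) * s0⁻¹ = t⁻¹ * (D * δ^k) := swap_inv ihk
        have hpow : δ^k * u = braidSigma n (i+1+k) * δ^k :=
          conjA_pow (n := n) (i+1) (n-i-1) (i+1) k (by omega) (le_refl _) (by omega) (by omega)
        have hcommlow : braidSigma n (i+1+k) * D = D * braidSigma n (i+1+k) :=
          comm_dscL_low (n := n) (i+1+k) i k h1 (by omega)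
        rw [dscL_top i k, show i+(k+1) = i+1+k by omega]
        set v := braidSigma n (i+1+k) with hv
        calc (t * D) * δ^(k+1) * s0
            = t * (D * δ^k * (δ * s0)) := by rw [pow_succ]; simp only [mul_assoc]
          _ = t * (D * δ^k * (s0⁻¹ * (u * (s0 * δ)))) := by rw [hbase']
          _ = t * ((D * δ^k * s0⁻¹) * (u * (s0 * δ))) := by simp only [mul_assoc]
          _ = t * ((t⁻¹ * (D * δ^k)) * (u * (s0 * δ))) := by rw [hinv]
          _ = D * (δ^k * u) * (s0 * δ) := by
                simp only [mul_assoc, mul_inv_cancel_left]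
          _ = D * (v * δ^k) * (s0 * δ) := by rw [hpow]
          _ = (D * v) * (δ^k * (s0 * δ)) := by simp only [mul_assoc]
          _ = (v * D) * (δ^k * (s0 * δ)) := by rw [← hcommlow]
          _ = v * ((D * δ^k * s0) * δ) := by simp only [mul_assoc]
          _ = v * ((t * (D * δ^k)) * δ) := by rw [ihk]
          _ = v * (t * D * δ^(k+1)) := by rw [pow_succ]; simp only [mul_assoc]

/-- `(σ_i ⋯ σ_{n-1})^k = (σ_{i+k-1} ⋯ σ_i) (σ_{i+1} ⋯ σ_{n-1})^k`. -/
lemma stepL (i : ℕ) (h1 : 1 ≤ i) : ∀ k, 1 ≤ k → i + k ≤ n →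
    (ascL n i (n-i))^k = dscL n i k * (ascL n (i+1) (n-i-1))^k := by
  intro k
  induction k with
  | zero => omega
  | succ k ih =>
      intro hk h
      have hsplit : ascL n i (n-i) = braidSigma n i * ascL n (i+1) (n-i-1) := by
        rw [show n - i = (n-i-1)+1 by omega]
        rfl
      rcases Nat.lt_or_ge k 1 with hk0 | hkk
      · have hk0 : k = 0 := by omega
        subst hk0
        rw [pow_one, pow_one, dscL_one, hsplit]
      · have ihk := ih hkk (by omega)
        have htau := tau (n := n) i h1 k hkk (by omega)
        calc (ascL n i (n-i))^(k+1)
            = (ascL n i (n-i))^k * ascL n i (n-i) := by rw [pow_succ]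
          _ = (dscL n i k * (ascL n (i+1) (n-i-1))^k) *
                (braidSigma n i * ascL n (i+1) (n-i-1)) := by rw [ihk, hsplit]
          _ = (dscL n i k * (ascL n (i+1) (n-i-1))^k * braidSigma n i) *
                ascL n (i+1) (n-i-1) := by simp only [mul_assoc]
          _ = (braidSigma n (i+k) * (dscL n i k * (ascL n (i+1) (n-i-1))^k)) *
                ascL n (i+1) (n-i-1) := by rw [htau]
          _ = (braidSigma n (i+k) * dscL n i k) * (ascL n (i+1) (n-i-1))^(k+1) := by
                rw [pow_succ]; simp only [mul_assoc]
          _ = dscL n i (k+1) * (ascL n (i+1) (n-i-1))^(k+1) := by rw [← dscL_top]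

/-- key commutation for the row lemma. -/
lemma lemD : ∀ l (i : ℕ), 1 ≤ i → i + l + 1 ≤ n →
    dscL n i l * dscL n (i+1) l * braidSigma n i
      = braidSigma n (i+l) * (dscL n i l * dscL n (i+1) l) := by
  intro l
  induction l with
  | zero => intro i _ _; simp [dscL]
  | succ l ih =>
      intro i h1 h
      have ihh := ih (i+1) (by omega) (by omega)
      have hbr := braid_rel (n := n) i h1 (by omega)
      have hc : braidSigma n i * dscL n (i+1+1) l = dscL n (i+1+1) l * braidSigma n i :=
        comm_dscL_high (n := n) i (i+1+1) l h1 (by omega)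
      rw [show i+(l+1) = i+1+l by omega]
      show (dscL n (i+1) l * braidSigma n i) * (dscL n (i+1+1) l * braidSigma n (i+1)) *
          braidSigma n i
        = braidSigma n (i+1+l) *
          ((dscL n (i+1) l * braidSigma n i) * (dscL n (i+1+1) l * braidSigma n (i+1)))
      set A := dscL n (i+1) l with hA
      set B := dscL n (i+1+1) l with hB
      set s0 := braidSigma n i with hs0
      set s1 := braidSigma n (i+1) with hs1
      calc (A * s0) * (B * s1) * s0
          = A * (s0 * B) * (s1 * s0) := by simp only [mul_assoc]
        _ = A * (B * s0) * (s1 * s0) := by rw [hc]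
        _ = (A * B) * (s0 * s1 * s0) := by simp only [mul_assoc]
        _ = (A * B) * (s1 * s0 * s1) := by rw [hbr]
        _ = (A * B * s1) * (s0 * s1) := by simp only [mul_assoc]
        _ = (braidSigma n (i+1+l) * (A * B)) * (s0 * s1) := by rw [ihh]
        _ = braidSigma n (i+1+l) * (A * (B * s0) * s1) := by simp only [mul_assoc]
        _ = braidSigma n (i+1+l) * (A * (s0 * B) * s1) := by rw [← hc]
        _ = braidSigma n (i+1+l) * ((A * s0) * (B * s1)) := by simp only [mul_assoc]

lemma list_dscL : ∀ (l b a : ℕ), a + l = b + 1 →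
    ((List.range l).map (fun t => braidSigma n (b - t))).prod = dscL n a l := by
  intro l
  induction l with
  | zero => intro b a _; simp [dscL]
  | succ l ih =>
      intro b a hab
      rw [List.range_succ, List.map_append, List.prod_append]
      simp only [List.map_cons, List.map_nil, List.prod_cons, List.prod_nil, mul_one]
      rw [ih b (a+1) (by omega), show b - l = a by omega]
      rfl

lemma braidA_eq (i j : ℕ) (hij : i + 1 ≤ j) :
    braidA n i j = dscL n (i+1) (j-1-i) * (braidSigma n i)^2 * (dscL n (i+1) (j-1-i))⁻¹ := by
  unfold braidA
  rw [list_dscL (j-1-i) (j-1) (i+1) (by omega)]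

/-- Row lemma : `a_{i,i+1} a_{i,i+2} ⋯ a_{i,i+l} = (σ_i ⋯ σ_{i+l-1})(σ_{i+l-1} ⋯ σ_i)`. -/
lemma rowProd : ∀ l (i : ℕ), 1 ≤ i → i + l ≤ n →
    ((List.range l).map (fun s => braidA n i (i+1+s))).prod = ascL n i l * dscL n i l := by
  intro l
  induction l with
  | zero => intro i _ _; simp [ascL, dscL]
  | succ l ih =>
      intro i h1 h
      rw [List.range_succ, List.map_append, List.prod_append]
      simp only [List.map_cons, List.map_nil, List.prod_cons, List.prod_nil, mul_one]
      rw [ih i h1 (by omega)]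
      have hA : braidA n i (i+1+l) = dscL n (i+1) l * (braidSigma n i)^2 * (dscL n (i+1) l)⁻¹ := by
        rw [braidA_eq i (i+1+l) (by omega), show i+1+l-1-i = l by omega]
      rw [hA, ascL_snoc i l, dscL_top i l]
      have hD := lemD (n := n) l i h1 (by omega)
      set A := ascL n i l with hAs
      set D := dscL n i l with hDs
      set E := dscL n (i+1) l with hEs
      set s0 := braidSigma n i with hs0
      set t := braidSigma n (i+l) with htt
      simp only [mul_assoc] at hD
      have hDD : D * (E * (s0 * s0)) = t * (t * (D * E)) := by
        calc D * (E * (s0 * s0)) = (D * (E * s0)) * s0 := by simp only [mul_assoc]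
          _ = (t * (D * E)) * s0 := by rw [hD]
          _ = t * (D * (E * s0)) := by simp only [mul_assoc]
          _ = t * (t * (D * E)) := by rw [hD]
      calc A * D * (E * s0^2 * E⁻¹)
          = A * (D * (E * (s0 * s0))) * E⁻¹ := by rw [pow_two]; simp only [mul_assoc]
        _ = A * (t * (t * (D * E))) * E⁻¹ := by rw [hDD]
        _ = A * (t * (t * (D * (E * E⁻¹)))) := by simp only [mul_assoc]
        _ = A * (t * (t * D)) := by rw [mul_inv_cancel, mul_one]
        _ = (A * t) * (t * D) := by simp only [mul_assoc]

def iterProd {M : Type*} [Monoid M] (f : ℕ → M) : ℕ → ℕ → M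
  | _, 0 => 1
  | a, (r+1) => f a * iterProd f (a+1) r

lemma range_map_eq_iterProd {M : Type*} [Monoid M] (f : ℕ → M) :
    ∀ (l a : ℕ), ((List.range l).map (fun t => f (a+t))).prod = iterProd f a l := by
  intro l
  induction l with
  | zero => intro a; simp [iterProd]
  | succ l ih =>
      intro a
      rw [List.range_succ_eq_map]
      simp only [List.map_cons, List.prod_cons, List.map_map]
      have e : ((fun t => f (a+t)) ∘ Nat.succ) = fun t => f ((a+1)+t) := by
        funext t
        simp only [Function.comp_apply]
        congr 1
        omega
      rw [e, ih (a+1)]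
      show f (a + 0) * iterProd f (a+1) l = iterProd f a (l+1)
      rw [Nat.add_zero]
      rfl

lemma iterProd_sigma : ∀ (l a : ℕ), iterProd (braidSigma n) a l = ascL n a l := by
  intro l
  induction l with
  | zero => intro a; rfl
  | succ l ih =>
      intro a
      show braidSigma n a * iterProd (braidSigma n) (a+1) l
        = braidSigma n a * ascL n (a+1) l
      rw [ih (a+1)]

/-- row `i` : `a_{i,i+1} a_{i,i+2} ⋯ a_{i,n}`. -/
def rowF (n i : ℕ) : BraidGroup n :=
  ((List.range (n - i)).map (fun s => braidA n i (i+1+s))).prod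

lemma fullTwist : ∀ (r i : ℕ), 1 ≤ i → i + r = n →
    (ascL n i r)^(r+1) = iterProd (rowF n) i r := by
  intro r
  induction r with
  | zero =>
      intro i _ _
      show (ascL n i 0)^(0+1) = iterProd (rowF n) i 0
      show (1 : BraidGroup n)^(0+1) = 1
      simp
  | succ r ih =>
      intro i h1 hsum
      have hni : n - i = r + 1 := by omega
      have hstep := stepL (n := n) i h1 (r+1) (by omega) (by omega)
      rw [hni, Nat.add_sub_cancel] at hstep
      have hrow := rowProd (n := n) (r+1) i h1 (by omega)
      have ihh := ih (i+1) (by omega) (by omega)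
      have hrowF : rowF n i = ascL n i (r+1) * dscL n i (r+1) := by
        unfold rowF
        rw [hni]
        exact hrow
      calc (ascL n i (r+1))^(r+1+1)
          = ascL n i (r+1) * (ascL n i (r+1))^(r+1) := by rw [pow_succ']
        _ = ascL n i (r+1) * (dscL n i (r+1) * (ascL n (i+1) r)^(r+1)) := by rw [hstep]
        _ = (ascL n i (r+1) * dscL n i (r+1)) * (ascL n (i+1) r)^(r+1) := by
              simp only [mul_assoc]
        _ = rowF n i * (ascL n (i+1) r)^(r+1) := by rw [hrowF]
        _ = rowF n i * iterProd (rowF n) (i+1) r := by rw [ihh]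
        _ = iterProd (rowF n) i (r+1) := rfl

end BraidPf

/-- In the braid group `B_n` (`n ≥ 2`), the full twist decomposes as
`(σ_1 ⋯ σ_{n-1})^n` equals the product over `i = 1, …, n-1` (in increasing order)
of the products `a_{i,i+1} a_{i,i+2} ⋯ a_{i,n}` (in increasing order of the
second index). -/
theorem braid_full_twist_decomposition (n : ℕ) (hn : 2 ≤ n) :
    (((List.range (n - 1)).map (fun t => braidSigma n (t + 1))).prod) ^ n =
      ((List.range (n - 1)).map (fun t =>
        (((List.range (n - (t + 1))).map
          (fun s => braidA n (t + 1) (t + 2 + s))).prod))).prod := by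
  rw [show (fun t => braidSigma n (t+1)) = (fun t => braidSigma n (1+t)) from
    funext fun t => by rw [Nat.add_comm]]
  rw [BraidPf.range_map_eq_iterProd (braidSigma n) (n-1) 1, BraidPf.iterProd_sigma]
  have e2 : (fun t => (((List.range (n - (t+1))).map
      (fun s => braidA n (t+1) (t+2+s))).prod)) = (fun t => BraidPf.rowF n (1+t)) := by
    funext t
    unfold BraidPf.rowF
    rw [show (1:ℕ)+t = t+1 from by omega]
  rw [e2, BraidPf.range_map_eq_iterProd (BraidPf.rowF n) (n-1) 1]
  have hft := BraidPf.fullTwist (n := n) (n-1) 1 (le_refl 1) (by omega)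
  rw [show n - 1 + 1 = n by omega] at hft
  exact hft
end

section
/- Let G be a group, n ≥ 1, and let v_1, …, v_{n−1}, s_1, …, s_n be elements of G such that v_j s_j v_j^{−1} = s_{j+1} for every 1 ≤ j ≤ n−1, and v_k s_j = s_j v_k whenever 1 ≤ k ≤ n−1, 1 ≤ j ≤ n and k ∉ {j−1, j}. Then (s_1 v_1 v_2 ⋯ v_{n−1})^n = s_1 s_2 ⋯ s_n (v_1 v_2 ⋯ v_{n−1})^n. -/
private lemma map_range_shift {G : Type*} (f : ℕ → G) (m : ℕ) :
    (List.range m).map (fun t => f (t + 1)) = (List.range' 1 m).map f := by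
  rw [List.range_eq_range', ← List.map_add_range' (a := 1) 0 m 1, List.map_map]
  congr 1
  ext t
  simp [Nat.add_comm]

/-- Let `G` be a group, `n ≥ 1`, and `v_1, …, v_{n-1}, s_1, …, s_n ∈ G` such that
`v_j s_j v_j⁻¹ = s_{j+1}` for `1 ≤ j ≤ n-1`, and `v_k s_j = s_j v_k` whenever
`1 ≤ k ≤ n-1`, `1 ≤ j ≤ n` and `k ∉ {j-1, j}`. Then
`(s_1 v_1 v_2 ⋯ v_{n-1})^n = s_1 s_2 ⋯ s_n (v_1 v_2 ⋯ v_{n-1})^n`. -/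
theorem prod_conj_shift_identity {G : Type*} [Group G] (n : ℕ) (hn : 1 ≤ n)
    (v s : ℕ → G)
    (hconj : ∀ j : ℕ, 1 ≤ j → j ≤ n - 1 → v j * s j * (v j)⁻¹ = s (j + 1))
    (hcomm : ∀ k j : ℕ, 1 ≤ k → k ≤ n - 1 → 1 ≤ j → j ≤ n →
      k ≠ j - 1 → k ≠ j → v k * s j = s j * v k) :
    (s 1 * ((List.range (n - 1)).map (fun t => v (t + 1))).prod) ^ n =
      (((List.range n).map (fun t => s (t + 1))).prod) *
        (((List.range (n - 1)).map (fun t => v (t + 1))).prod) ^ n := by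
  rw [map_range_shift, map_range_shift]
  set V : G := ((List.range' 1 (n - 1)).map v).prod with hV
  -- conjugation of s j by the full product V
  have hconj' : ∀ j : ℕ, 1 ≤ j → j ≤ n - 1 → v j * s j = s (j + 1) * v j := by
    intro j h1 h2
    have := hconj j h1 h2
    rw [← this]; group
  have keyA : ∀ j : ℕ, 1 ≤ j → j ≤ n - 1 → V * s j = s (j + 1) * V := by
    intro j h1 h2
    have hsplit : List.range' 1 (n - 1) =
        List.range' 1 (j - 1) ++ [j] ++ List.range' (j + 1) (n - 1 - j) := by
      have e1 : List.range' 1 (j - 1) ++ [j] = List.range' 1 j := by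
        have e2 := List.range'_1_concat (s := 1) (n := j - 1)
        rw [show 1 + (j - 1) = j from by omega, show j - 1 + 1 = j from by omega] at e2
        exact e2.symm
      rw [e1, show j + 1 = 1 + j from by omega, List.range'_append_1]
      congr 1
      omega
    rw [hV, hsplit]
    simp only [List.map_append, List.prod_append, List.map_cons, List.map_nil,
      List.prod_cons, List.prod_nil, mul_one]
    have hB : (((List.range' (j + 1) (n - 1 - j)).map v).prod) * s j
        = s j * (((List.range' (j + 1) (n - 1 - j)).map v).prod) := by
      have : Commute (((List.range' (j + 1) (n - 1 - j)).map v).prod) (s j) := by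
        apply Commute.list_prod_left
        intro x hx
        simp only [List.mem_map, List.mem_range'] at hx
        obtain ⟨k, ⟨i, hi, rfl⟩, rfl⟩ := hx
        exact hcomm _ j (by omega) (by omega) h1 (by omega) (by omega) (by omega)
      exact this.eq
    have hA : (((List.range' 1 (j - 1)).map v).prod) * s (j + 1)
        = s (j + 1) * (((List.range' 1 (j - 1)).map v).prod) := by
      have : Commute (((List.range' 1 (j - 1)).map v).prod) (s (j + 1)) := by
        apply Commute.list_prod_left
        intro x hx
        simp only [List.mem_map, List.mem_range'] at hx
        obtain ⟨k, ⟨i, hi, rfl⟩, rfl⟩ := hx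
        exact hcomm _ (j + 1) (by omega) (by omega) (by omega) (by omega)
          (by omega) (by omega)
      exact this.eq
    calc ((List.range' 1 (j - 1)).map v).prod * v j * ((List.range' (j+1) (n-1-j)).map v).prod * s j
        = ((List.range' 1 (j - 1)).map v).prod * v j * (((List.range' (j+1) (n-1-j)).map v).prod * s j) := by
          group
      _ = ((List.range' 1 (j - 1)).map v).prod * (v j * s j) * ((List.range' (j+1) (n-1-j)).map v).prod := by
          rw [hB]; group
      _ = ((List.range' 1 (j - 1)).map v).prod * s (j + 1) * (v j * ((List.range' (j+1) (n-1-j)).map v).prod) := by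
          rw [hconj' j h1 h2]; group
      _ = s (j + 1) * (((List.range' 1 (j - 1)).map v).prod * v j * ((List.range' (j+1) (n-1-j)).map v).prod) := by
          rw [← mul_assoc, hA]; group
  -- iterated conjugation
  have keyB : ∀ m j : ℕ, 1 ≤ j → j + m ≤ n → V ^ m * s j = s (j + m) * V ^ m := by
    intro m
    induction m with
    | zero => intro j _ _; simp
    | succ m ih =>
      intro j h1 h2
      have hVs : V * s j = s (j + 1) * V := keyA j h1 (by omega)
      calc V ^ (m + 1) * s j = V ^ m * (V * s j) := by rw [pow_succ]; group
        _ = V ^ m * s (j + 1) * V := by rw [hVs]; group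
        _ = s (j + 1 + m) * V ^ m * V := by rw [ih (j + 1) (by omega) (by omega)]
        _ = s (j + (m + 1)) * V ^ (m + 1) := by
              rw [show j + (m + 1) = j + 1 + m from by omega, pow_succ]; group
  -- main induction
  have main : ∀ m : ℕ, m ≤ n →
      (s 1 * V) ^ m = ((List.range' 1 m).map s).prod * V ^ m := by
    intro m
    induction m with
    | zero => simp
    | succ m ih =>
      intro h
      have hS : (List.range' 1 (m + 1)).map s = (List.range' 1 m).map s ++ [s (m + 1)] := by
        rw [List.range'_1_concat, List.map_append, show 1 + m = m + 1 from by omega]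
        rfl
      calc (s 1 * V) ^ (m + 1) = (s 1 * V) ^ m * (s 1 * V) := pow_succ _ _
        _ = ((List.range' 1 m).map s).prod * (V ^ m * s 1) * V := by
            rw [ih (by omega)]; group
        _ = ((List.range' 1 m).map s).prod * (s (1 + m) * V ^ m) * V := by
            rw [keyB m 1 le_rfl (by omega)]
        _ = ((List.range' 1 m).map s).prod * s (m + 1) * V ^ (m + 1) := by
            rw [show 1 + m = m + 1 from Nat.add_comm 1 m, pow_succ]; group
        _ = ((List.range' 1 (m + 1)).map s).prod * V ^ (m + 1) := by
            rw [hS, List.prod_append]; simp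
  exact main n le_rfl
end

section
/- Let 1 → K →ι G →ρ H → 1 be a short exact sequence of groups (ι injective, ρ surjective, image of ι equal to kernel of ρ). Suppose κ : S_K → K presents K with relations R_K ⊆ FreeGroup S_K, and η : S_H → H presents H with relations R_H ⊆ FreeGroup S_H. Let ℓ : S_H → G be any lift with ρ ∘ ℓ = η, and let ℓ̄ : FreeGroup S_H → G and κ̄ : FreeGroup S_K → K be the induced homomorphisms. For each r ∈ R_H choose w_r ∈ FreeGroup S_K with ι(κ̄(w_r)) = ℓ̄(r) (possible since ℓ̄(r) ∈ ker ρ), and for each x ∈ S_H, y ∈ S_K choose v(x,y) ∈ FreeGroup S_K with ι(κ̄(v(x,y))) = ℓ(x) ι(κ(y)) ℓ(x)^{−1} (possible since ι(K) is normal in G). Then the map S_H ⊔ S_K → G given by ℓ on S_H and ι ∘ κ on S_K presents G: the induced homomorphism FreeGroup (S_H ⊔ S_K) → G is surjective with kernel equal to the normal closure of R₁ ∪ R₂ ∪ R_K, where R₁ = { r · w_r^{−1} : r ∈ R_H }, R₂ = { x y x^{−1} v(x,y)^{−1} : x ∈ S_H, y ∈ S_K }, and R_H, R_K, and these words are viewed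 in FreeGroup (S_H ⊔ S_K) via the inclusions of S_H and S_K. -/
/-- Let `1 → K → G → H → 1` be a short exact sequence of groups, where
`κ : S_K → K` presents `K` with relations `R_K` and `η : S_H → H` presents `H`
with relations `R_H`. Let `ℓ : S_H → G` be a set-theoretic lift of `η`, for each
`r ∈ R_H` let `w r ∈ FreeGroup S_K` satisfy `ι (κ̄ (w r)) = ℓ̄ r`, and for each
`x ∈ S_H`, `y ∈ S_K` let `v x y ∈ FreeGroup S_K` satisfy
`ι (κ̄ (v x y)) = ℓ x · ι (κ y) · (ℓ x)⁻¹`. Then the map `S_H ⊕ S_K → G` given by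
`ℓ` and `ι ∘ κ` presents `G` with relations
`R₁ = {r · (w r)⁻¹ : r ∈ R_H}`, `R₂ = {x y x⁻¹ (v x y)⁻¹ : x ∈ S_H, y ∈ S_K}`
and `R_K`, all viewed in `FreeGroup (S_H ⊕ S_K)`. -/
theorem presentation_of_extension
    {K G H : Type*} [Group K] [Group G] [Group H]
    {S_K S_H : Type*}
    (ι : K →* G) (ρ : G →* H)
    (hι : Function.Injective ι) (hρ : Function.Surjective ρ)
    (hexact : ι.range = ρ.ker)
    (κ : S_K → K) (R_K : Set (FreeGroup S_K))
    (hκsurj : Function.Surjective (FreeGroup.lift κ))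
    (hκker : (FreeGroup.lift κ : FreeGroup S_K →* K).ker = Subgroup.normalClosure R_K)
    (η : S_H → H) (R_H : Set (FreeGroup S_H))
    (hηsurj : Function.Surjective (FreeGroup.lift η))
    (hηker : (FreeGroup.lift η : FreeGroup S_H →* H).ker = Subgroup.normalClosure R_H)
    (l : S_H → G) (hl : ∀ x, ρ (l x) = η x)
    (w : FreeGroup S_H → FreeGroup S_K)
    (hw : ∀ r ∈ R_H, ι (FreeGroup.lift κ (w r)) = FreeGroup.lift l r)
    (v : S_H → S_K → FreeGroup S_K)
    (hv : ∀ x y, ι (FreeGroup.lift κ (v x y)) = l x * ι (κ y) * (l x)⁻¹) :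
    Function.Surjective
      (FreeGroup.lift (Sum.elim l (fun y => ι (κ y))) : FreeGroup (S_H ⊕ S_K) →* G) ∧
    (FreeGroup.lift (Sum.elim l (fun y => ι (κ y))) : FreeGroup (S_H ⊕ S_K) →* G).ker =
      Subgroup.normalClosure
        ((fun r => FreeGroup.map Sum.inl r * (FreeGroup.map Sum.inr (w r))⁻¹) '' R_H ∪
         {z : FreeGroup (S_H ⊕ S_K) | ∃ (x : S_H) (y : S_K),
            z = FreeGroup.of (Sum.inl x) * FreeGroup.of (Sum.inr y) *
              (FreeGroup.of (Sum.inl x))⁻¹ * (FreeGroup.map Sum.inr (v x y))⁻¹} ∪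
         (FreeGroup.map Sum.inr) '' R_K) := by
  classical
  set φ : FreeGroup (S_H ⊕ S_K) →* G :=
    (FreeGroup.lift (Sum.elim l (fun y => ι (κ y))) : FreeGroup (S_H ⊕ S_K) →* G) with hφdef
  set R : Set (FreeGroup (S_H ⊕ S_K)) :=
    ((fun r => FreeGroup.map Sum.inl r * (FreeGroup.map Sum.inr (w r))⁻¹) '' R_H ∪
         {z : FreeGroup (S_H ⊕ S_K) | ∃ (x : S_H) (y : S_K),
            z = FreeGroup.of (Sum.inl x) * FreeGroup.of (Sum.inr y) *
              (FreeGroup.of (Sum.inl x))⁻¹ * (FreeGroup.map Sum.inr (v x y))⁻¹} ∪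
         (FreeGroup.map Sum.inr) '' R_K) with hRdef
  -- basic computations
  have hφinl : ∀ a : FreeGroup S_H, φ (FreeGroup.map Sum.inl a) = FreeGroup.lift l a := by
    intro a
    have h : φ.comp (FreeGroup.map Sum.inl) = FreeGroup.lift l :=
      FreeGroup.ext_hom _ _ (fun x => by simp [hφdef])
    exact DFunLike.congr_fun h a
  have hφinr : ∀ b : FreeGroup S_K, φ (FreeGroup.map Sum.inr b) = ι (FreeGroup.lift κ b) := by
    intro b
    have h : φ.comp (FreeGroup.map Sum.inr) = ι.comp (FreeGroup.lift κ) :=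
      FreeGroup.ext_hom _ _ (fun y => by simp [hφdef])
    exact DFunLike.congr_fun h b
  have hρl : ∀ a : FreeGroup S_H, ρ (FreeGroup.lift l a) = FreeGroup.lift η a := by
    intro a
    have h : ρ.comp (FreeGroup.lift l) = FreeGroup.lift η :=
      FreeGroup.ext_hom _ _ (fun x => by simp [hl])
    exact DFunLike.congr_fun h a
  have hριk : ∀ k : K, ρ (ι k) = 1 := by
    intro k
    have : ι k ∈ ρ.ker := hexact ▸ ⟨k, rfl⟩
    exact this
  -- surjectivity
  have hsurj : Function.Surjective φ := by
    intro g
    obtain ⟨u, hu⟩ := hηsurj (ρ g)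
    have h1 : g * (FreeGroup.lift l u)⁻¹ ∈ ι.range := by
      rw [hexact, MonoidHom.mem_ker, map_mul, map_inv, hρl, hu, mul_inv_cancel]
    obtain ⟨k, hk⟩ := h1
    obtain ⟨t, ht⟩ := hκsurj k
    refine ⟨FreeGroup.map Sum.inr t * FreeGroup.map Sum.inl u, ?_⟩
    rw [map_mul, hφinr, hφinl, ht, hk]
    group
  have hNle : Subgroup.normalClosure R ≤ φ.ker := by
    apply Subgroup.normalClosure_le_normal
    rintro z ((⟨r, hr, rfl⟩ | ⟨x, y, rfl⟩) | ⟨t, ht, rfl⟩)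
    · have : φ (FreeGroup.map Sum.inl r * (FreeGroup.map Sum.inr (w r))⁻¹) = 1 := by
        rw [map_mul, map_inv, hφinl, hφinr, hw r hr, mul_inv_cancel]
      exact this
    · have : φ (FreeGroup.of (Sum.inl x) * FreeGroup.of (Sum.inr y) *
          (FreeGroup.of (Sum.inl x))⁻¹ * (FreeGroup.map Sum.inr (v x y))⁻¹) = 1 := by
        rw [map_mul, map_mul, map_mul, map_inv, map_inv, hφinr, hv]
        simp only [hφdef, FreeGroup.lift_apply_of, Sum.elim_inl, Sum.elim_inr]
        group
      exact this
    · have : φ (FreeGroup.map Sum.inr t) = 1 := by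
        rw [hφinr]
        have : FreeGroup.lift κ t = 1 := by
          have : t ∈ (FreeGroup.lift κ : FreeGroup S_K →* K).ker := by
            rw [hκker]; exact Subgroup.subset_normalClosure ht
          exact this
        rw [this, map_one]
      exact this
  -- the quotient
  set N := Subgroup.normalClosure R with hNdef
  have hπ : ∀ f, QuotientGroup.mk' N f = 1 ↔ f ∈ N := fun f => QuotientGroup.eq_one_iff f
  -- L1
  have L1 : ∀ t : FreeGroup S_K, FreeGroup.lift κ t = 1 → FreeGroup.map Sum.inr t ∈ N := by
    intro t ht
    have h1 : t ∈ Subgroup.normalClosure R_K := by rw [← hκker]; exact ht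
    haveI : (N.comap (FreeGroup.map Sum.inr : FreeGroup S_K →* FreeGroup (S_H ⊕ S_K))).Normal :=
      Subgroup.Normal.comap (Subgroup.normalClosure_normal) _
    have hle : Subgroup.normalClosure R_K ≤
        N.comap (FreeGroup.map Sum.inr : FreeGroup S_K →* FreeGroup (S_H ⊕ S_K)) := by
      apply Subgroup.normalClosure_le_normal
      intro s hs
      exact Subgroup.subset_normalClosure (Or.inr ⟨s, hs, rfl⟩)
    exact hle h1
  -- L2
  have L2 : ∀ t t' : FreeGroup S_K, FreeGroup.lift κ t = FreeGroup.lift κ t' →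
      (QuotientGroup.mk' N) (FreeGroup.map Sum.inr t) =
      (QuotientGroup.mk' N) (FreeGroup.map Sum.inr t') := by
    intro t t' h
    have : FreeGroup.map Sum.inr t / FreeGroup.map Sum.inr t' ∈ N := by
      rw [← map_div]
      exact L1 _ (by rw [map_div, h, div_self'])
    exact QuotientGroup.eq_iff_div_mem.mpr this
  -- relations in the quotient
  have hR1 : ∀ r ∈ R_H, (QuotientGroup.mk' N) (FreeGroup.map Sum.inl r) =
      (QuotientGroup.mk' N) (FreeGroup.map Sum.inr (w r)) := by
    intro r hr
    apply QuotientGroup.eq_iff_div_mem.mpr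
    rw [div_eq_mul_inv]
    exact Subgroup.subset_normalClosure (Or.inl (Or.inl ⟨r, hr, rfl⟩))
  have hR2 : ∀ (x : S_H) (y : S_K),
      (QuotientGroup.mk' N) (FreeGroup.of (Sum.inl x)) *
      (QuotientGroup.mk' N) (FreeGroup.of (Sum.inr y)) *
      ((QuotientGroup.mk' N) (FreeGroup.of (Sum.inl x)))⁻¹ =
      (QuotientGroup.mk' N) (FreeGroup.map Sum.inr (v x y)) := by
    intro x y
    rw [← map_inv, ← map_mul, ← map_mul]
    apply QuotientGroup.eq_iff_div_mem.mpr
    rw [div_eq_mul_inv]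
    exact Subgroup.subset_normalClosure (Or.inl (Or.inr ⟨x, y, rfl⟩))
  -- Claim A : conjugation formula in the quotient
  have hA : ∀ (x : S_H) (b : FreeGroup S_K),
      (QuotientGroup.mk' N) (FreeGroup.of (Sum.inl x)) *
      (QuotientGroup.mk' N) (FreeGroup.map Sum.inr b) *
      ((QuotientGroup.mk' N) (FreeGroup.of (Sum.inl x)))⁻¹ =
      (QuotientGroup.mk' N) (FreeGroup.map Sum.inr (FreeGroup.lift (v x) b)) := by
    intro x b
    have h : (MulAut.conj ((QuotientGroup.mk' N) (FreeGroup.of (Sum.inl x)))).toMonoidHom.comp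
        ((QuotientGroup.mk' N).comp (FreeGroup.map Sum.inr)) =
        ((QuotientGroup.mk' N).comp (FreeGroup.map Sum.inr)).comp (FreeGroup.lift (v x)) := by
      apply FreeGroup.ext_hom
      intro y
      simp only [MonoidHom.comp_apply, MulEquiv.toMonoidHom_eq_coe, MonoidHom.coe_coe,
        MulAut.conj_apply, FreeGroup.map.of, FreeGroup.lift_apply_of]
      exact hR2 x y
    have := DFunLike.congr_fun h b
    simpa using this
  -- Claim B : the conjugation corresponds to conjugation in G
  have hB : ∀ (x : S_H) (b : FreeGroup S_K),
      ι (FreeGroup.lift κ (FreeGroup.lift (v x) b)) =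
      l x * ι (FreeGroup.lift κ b) * (l x)⁻¹ := by
    intro x b
    have h : (ι.comp (FreeGroup.lift κ)).comp (FreeGroup.lift (v x)) =
        (MulAut.conj (l x)).toMonoidHom.comp (ι.comp (FreeGroup.lift κ)) := by
      apply FreeGroup.ext_hom
      intro y
      simp only [MonoidHom.comp_apply, MulEquiv.toMonoidHom_eq_coe, MonoidHom.coe_coe,
        MulAut.conj_apply, FreeGroup.lift_apply_of]
      exact hv x y
    have := DFunLike.congr_fun h b
    simpa using this
  -- Claim C : conjugation is onto
  have hC : ∀ (x : S_H) (b : FreeGroup S_K), ∃ b' : FreeGroup S_K,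
      (QuotientGroup.mk' N) (FreeGroup.of (Sum.inl x)) *
      (QuotientGroup.mk' N) (FreeGroup.map Sum.inr b') *
      ((QuotientGroup.mk' N) (FreeGroup.of (Sum.inl x)))⁻¹ =
      (QuotientGroup.mk' N) (FreeGroup.map Sum.inr b) := by
    intro x b
    have hmem : (l x)⁻¹ * ι (FreeGroup.lift κ b) * l x ∈ ι.range := by
      rw [hexact, MonoidHom.mem_ker, map_mul, map_mul, map_inv, hριk]
      group
    obtain ⟨k', hk'⟩ := hmem
    obtain ⟨b', hb'⟩ := hκsurj k'
    refine ⟨b', ?_⟩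
    rw [hA]
    apply L2
    apply hι
    rw [hB, hb', hk']
    group
  -- the subgroup M
  set M := ((QuotientGroup.mk' N).comp
    (FreeGroup.map Sum.inr : FreeGroup S_K →* FreeGroup (S_H ⊕ S_K))).range with hMdef
  have hMnormal : M.Normal := by
    rw [← Subgroup.normalizer_eq_top_iff, eq_top_iff]
    have hgen : Subgroup.closure
        ((QuotientGroup.mk' N) '' (Set.range (FreeGroup.of : (S_H ⊕ S_K) → _))) =
        (⊤ : Subgroup (FreeGroup (S_H ⊕ S_K) ⧸ N)) := by
      rw [← MonoidHom.map_closure, FreeGroup.closure_range_of,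
        Subgroup.map_top_of_surjective _ (QuotientGroup.mk'_surjective N)]
    rw [← hgen]
    refine (Subgroup.closure_le _).mpr ?_
    rintro _ ⟨_, ⟨s, rfl⟩, rfl⟩
    rw [SetLike.mem_coe]
    cases s with
    | inr y =>
      apply Subgroup.le_normalizer
      exact ⟨FreeGroup.of y, by simp only [MonoidHom.comp_apply, FreeGroup.map.of]⟩
    | inl x =>
      rw [Subgroup.mem_normalizer_iff]
      intro q
      constructor
      · rintro ⟨b, rfl⟩
        exact ⟨FreeGroup.lift (v x) b, (hA x b).symm⟩
      · rintro ⟨b, hb⟩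
        obtain ⟨b', hb'⟩ := hC x b
        refine ⟨b', ?_⟩
        simp only [MonoidHom.comp_apply] at hb hb' ⊢
        rw [hb] at hb'
        have := mul_left_cancel (mul_right_cancel hb')
        exact this
  haveI := hMnormal
  -- the induced map φbar
  set φbar := QuotientGroup.lift N φ hNle with hφbardef
  have hφbar : ∀ f, φbar ((QuotientGroup.mk' N) f) = φ f := fun f => rfl
  -- δ : FreeGroup S_H →* Q2 and its surjectivity
  set δ := ((QuotientGroup.mk' M).comp (QuotientGroup.mk' N)).comp
    (FreeGroup.map Sum.inl : FreeGroup S_H →* FreeGroup (S_H ⊕ S_K)) with hδdef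
  have hδsurj : ∀ q2, ∃ a, δ a = q2 := by
    intro q2
    obtain ⟨q, rfl⟩ := QuotientGroup.mk'_surjective M q2
    obtain ⟨f, rfl⟩ := QuotientGroup.mk'_surjective N q
    induction f using FreeGroup.induction_on with
    | C1 => exact ⟨1, by simp⟩
    | of s =>
      show ∃ a, δ a = (QuotientGroup.mk' M) ((QuotientGroup.mk' N) (FreeGroup.of s))
      cases s with
      | inl x =>
        refine ⟨FreeGroup.of x, ?_⟩
        rw [hδdef]
        simp only [MonoidHom.comp_apply, FreeGroup.map.of]
      | inr y =>
        refine ⟨1, ?_⟩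
        rw [map_one]
        symm
        rw [QuotientGroup.mk'_apply, QuotientGroup.eq_one_iff]
        exact ⟨FreeGroup.of y, by simp only [MonoidHom.comp_apply, FreeGroup.map.of]⟩
    | inv_of s ih =>
      obtain ⟨a, ha⟩ := ih
      exact ⟨a⁻¹, by rw [map_inv, ha, ← map_inv, ← map_inv]⟩
    | mul f g ihf ihg =>
      obtain ⟨a, ha⟩ := ihf
      obtain ⟨a', ha'⟩ := ihg
      exact ⟨a * a', by rw [map_mul, ha, ha', ← map_mul, ← map_mul]⟩
  -- δ kills the kernel of lift η
  have hδker : ∀ a : FreeGroup S_H, FreeGroup.lift η a = 1 → δ a = 1 := by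
    intro a ha
    have h1 : a ∈ Subgroup.normalClosure R_H := by rw [← hηker]; exact ha
    have hle : Subgroup.normalClosure R_H ≤ δ.ker := by
      apply Subgroup.normalClosure_le_normal
      intro r hr
      have hδr : δ r = (QuotientGroup.mk' M) ((QuotientGroup.mk' N) (FreeGroup.map Sum.inr (w r))) := by
        rw [hδdef]
        simp only [MonoidHom.comp_apply]
        rw [hR1 r hr]
      rw [SetLike.mem_coe, MonoidHom.mem_ker, hδr, QuotientGroup.mk'_apply,
        QuotientGroup.eq_one_iff]
      exact ⟨w r, rfl⟩
    exact hle h1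
  -- the reverse inclusion
  have hker_le : φ.ker ≤ N := by
    intro g hg
    have hg1 : φ g = 1 := hg
    -- find a with δ a = image of g
    obtain ⟨a, ha⟩ := hδsurj ((QuotientGroup.mk' M) ((QuotientGroup.mk' N) g))
    -- the difference lies in M
    have h2 : ((QuotientGroup.mk' N) (FreeGroup.map Sum.inl a))⁻¹ * (QuotientGroup.mk' N) g ∈ M := by
      have h2' := ha
      rw [hδdef] at h2'
      simp only [MonoidHom.comp_apply, QuotientGroup.mk'_apply] at h2'
      exact QuotientGroup.eq.mp h2'
    obtain ⟨b, hb⟩ := h2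
    simp only [MonoidHom.comp_apply] at hb
    -- apply φbar
    have h3 : ι (FreeGroup.lift κ b) = (FreeGroup.lift l a)⁻¹ := by
      have := congrArg φbar hb
      rw [hφbar, map_mul, map_inv, hφbar, hφbar, hφinr, hφinl, hg1, mul_one] at this
      exact this
    have h4 : FreeGroup.lift η a = 1 := by
      have := congrArg ρ h3
      rw [hριk, map_inv, hρl] at this
      exact (inv_eq_one.mp this.symm)
    have h5 : (QuotientGroup.mk' M) ((QuotientGroup.mk' N) g) = 1 := by rw [← ha, hδker a h4]
    have h6 : (QuotientGroup.mk' N) g ∈ M := by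
      rw [QuotientGroup.mk'_apply, QuotientGroup.eq_one_iff] at h5
      exact h5
    obtain ⟨b2, hb2⟩ := h6
    simp only [MonoidHom.comp_apply] at hb2
    have h7 : ι (FreeGroup.lift κ b2) = 1 := by
      have := congrArg φbar hb2
      rw [hφbar, hφbar, hφinr, hg1] at this
      exact this
    have h8 : FreeGroup.lift κ b2 = 1 := hι (by rw [h7, map_one])
    have h9 : (QuotientGroup.mk' N) g = 1 := by
      rw [← hb2]
      exact (QuotientGroup.eq_one_iff _).mpr (L1 b2 h8)
    exact (QuotientGroup.eq_one_iff g).mp h9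
  exact ⟨hsurj, le_antisymm hker_le hNle⟩
end

section
/- In the Artin group A(B_n) of Coxeter type B_n (n ≥ 2), the element (x_1 x_2 ⋯ x_n)^n is central. -/
/-- The Artin relations of Coxeter type `B_n` on generators `x_1, …, x_n`
(generator `i : Fin n` corresponds to `x_{i+1}`):
`x_1 x_2 x_1 x_2 = x_2 x_1 x_2 x_1`, `x_i x_{i+1} x_i = x_{i+1} x_i x_{i+1}` for
`2 ≤ i ≤ n-1`, and `x_i x_j = x_j x_i` for `|i-j| ≥ 2`. -/
def artinBRels (n : ℕ) : Set (FreeGroup (Fin n)) :=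
  { r | (∃ a b : Fin n, (a : ℕ) = 0 ∧ (b : ℕ) = 1 ∧
          r = FreeGroup.of a * FreeGroup.of b * FreeGroup.of a * FreeGroup.of b *
              (FreeGroup.of b * FreeGroup.of a * FreeGroup.of b * FreeGroup.of a)⁻¹) ∨
        (∃ a b : Fin n, 1 ≤ (a : ℕ) ∧ (a : ℕ) + 1 = (b : ℕ) ∧
          r = FreeGroup.of a * FreeGroup.of b * FreeGroup.of a *
              (FreeGroup.of b * FreeGroup.of a * FreeGroup.of b)⁻¹) ∨
        (∃ a b : Fin n, (a : ℕ) + 2 ≤ (b : ℕ) ∧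
          r = FreeGroup.of a * FreeGroup.of b * (FreeGroup.of b * FreeGroup.of a)⁻¹) }

/-- The Artin group of Coxeter type `B_n`. -/
abbrev ArtinGroupB (n : ℕ) := PresentedGroup (artinBRels n)

namespace ArtinBAux

/-- `ℕ`-indexed generators, with junk value `1` out of range. -/
def y (n i : ℕ) : ArtinGroupB n :=
  if h : i < n then PresentedGroup.of ⟨i, h⟩ else 1

/-- Prefix products `P n k = y 0 * y 1 * ⋯ * y (k-1)`. -/
def P (n k : ℕ) : ArtinGroupB n := ((List.range k).map (y n)).prod

/-- `Q n j = y 1 * ⋯ * y j`. -/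
def Q (n j : ℕ) : ArtinGroupB n := ((List.range j).map (fun i => y n (i + 1))).prod

/-- `R n j = y 2 * ⋯ * y (j+1)`. -/
def R (n j : ℕ) : ArtinGroupB n := ((List.range j).map (fun i => y n (i + 2))).prod

variable {n : ℕ}

lemma rel_eq {r : FreeGroup (Fin n)} (h : r ∈ artinBRels n) :
    PresentedGroup.mk (artinBRels n) r = 1 :=
  (QuotientGroup.eq_one_iff r).mpr (Subgroup.subset_normalClosure h)

lemma y_eq (i : ℕ) (h : i < n) : y n i = PresentedGroup.of ⟨i, h⟩ := dif_pos h

lemma conj_inv {G : Type*} [Group G] {a b c : G} (h : a * b = b * c) :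
    b * c⁻¹ = a⁻¹ * b := by
  have h2 : a⁻¹ * (a * b) * c⁻¹ = a⁻¹ * (b * c) * c⁻¹ := by rw [h]
  simpa [mul_assoc] using h2

lemma rel1 (hn : 2 ≤ n) :
    y n 0 * y n 1 * y n 0 * y n 1 = y n 1 * y n 0 * y n 1 * y n 0 := by
  have h0 : 0 < n := by omega
  have h1 : 1 < n := by omega
  have h := rel_eq (n := n) (Or.inl ⟨⟨0, h0⟩, ⟨1, h1⟩, rfl, rfl, rfl⟩)
  rw [map_mul, map_inv, mul_inv_eq_one] at h
  simpa only [map_mul, y_eq 0 h0, y_eq 1 h1, PresentedGroup.of] using h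

lemma braid (a : ℕ) (h1 : 1 ≤ a) (h2 : a + 1 < n) :
    y n a * y n (a + 1) * y n a = y n (a + 1) * y n a * y n (a + 1) := by
  have ha : a < n := by omega
  have h := rel_eq (n := n)
    (Or.inr (Or.inl ⟨⟨a, ha⟩, ⟨a + 1, h2⟩, h1, rfl, rfl⟩))
  rw [map_mul, map_inv, mul_inv_eq_one] at h
  simpa only [map_mul, y_eq a ha, y_eq (a + 1) h2, PresentedGroup.of] using h

lemma comm (a b : ℕ) (hab : a + 2 ≤ b) : y n a * y n b = y n b * y n a := by
  by_cases hb : b < n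
  · have ha : a < n := by omega
    have h := rel_eq (n := n) (Or.inr (Or.inr ⟨⟨a, ha⟩, ⟨b, hb⟩, hab, rfl⟩))
    rw [map_mul, map_inv, mul_inv_eq_one] at h
    simpa only [map_mul, y_eq a ha, y_eq b hb, PresentedGroup.of] using h
  · simp [y, dif_neg hb]

lemma P_zero : P n 0 = 1 := rfl

lemma P_succ (k : ℕ) : P n (k + 1) = P n k * y n k := by
  rw [P, List.range_succ, List.map_append, List.prod_append]; simp [P]

lemma P_eq {k l : ℕ} (h : k = l + 1) : P n k = P n l * y n l := by
  rw [h]; exact P_succ l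

lemma Q_zero : Q n 0 = 1 := rfl

lemma Q_succ (j : ℕ) : Q n (j + 1) = Q n j * y n (j + 1) := by
  rw [Q, List.range_succ, List.map_append, List.prod_append]; simp [Q]

lemma R_zero : R n 0 = 1 := rfl

lemma R_succ (j : ℕ) : R n (j + 1) = R n j * y n (j + 2) := by
  rw [R, List.range_succ, List.map_append, List.prod_append]; simp [R]

lemma QR (j : ℕ) : Q n (j + 1) = y n 1 * R n j := by
  induction j with
  | zero => rw [Q_succ, Q_zero, R_zero, one_mul, mul_one]
  | succ j ih => rw [Q_succ, R_succ, ih, mul_assoc]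

lemma PQ (k : ℕ) : P n (k + 1) = y n 0 * Q n k := by
  induction k with
  | zero => rw [P_succ, P_zero, Q_zero, one_mul, mul_one]
  | succ k ih => rw [P_succ, Q_succ, ih, mul_assoc]

/-- `y j` commutes with `P k` whenever `k + 1 ≤ j`. -/
lemma commP (k j : ℕ) (h : k + 1 ≤ j) : y n j * P n k = P n k * y n j := by
  induction k with
  | zero => simp [P_zero]
  | succ k ih =>
    rw [P_succ, ← mul_assoc, ih (by omega), mul_assoc, ← comm k j (by omega),
      ← mul_assoc]

lemma commP' (k j : ℕ) (h : k + 1 ≤ j) (z : ArtinGroupB n) :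
    y n j * (P n k * z) = P n k * (y n j * z) := by
  simp only [← mul_assoc]; rw [commP k j h]

/-- Shift relation on prefixes. -/
lemma shiftP (i k : ℕ) (h1 : 1 ≤ i) (hik : i + 2 ≤ k) (hk : k ≤ n) :
    y n (i + 1) * P n k = P n k * y n i := by
  induction k, hik using Nat.le_induction with
  | base =>
    have hb : i + 1 < n := by omega
    rw [P_eq (show i + 2 = (i + 1) + 1 by omega), P_eq (show i + 1 = i + 1 by omega)]
    simp only [mul_assoc]
    rw [commP' i (i + 1) le_rfl]
    congr 1
    simp only [← mul_assoc]
    rw [braid i h1 hb]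
  | succ k hk2 ih =>
    rw [P_succ, ← mul_assoc, ih (by omega), mul_assoc, comm i k (by omega), ← mul_assoc]

/-- The full shift: `y (i+1) * δ = δ * y i` where `δ = P n n`. -/
lemma shift (i : ℕ) (h1 : 1 ≤ i) (h2 : i + 2 ≤ n) :
    y n (i + 1) * P n n = P n n * y n i :=
  shiftP i n h1 h2 le_rfl

/-- Iterated shift: `y (i+d) * δ^d = δ^d * y i`. -/
lemma chain (d : ℕ) : ∀ i : ℕ, 1 ≤ i → i + d + 1 ≤ n →
    y n (i + d) * (P n n) ^ d = (P n n) ^ d * y n i := by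
  induction d with
  | zero => intro i _ _; simp
  | succ d ih =>
    intro i h1 h2
    have e : i + (d + 1) = (i + 1) + d := by omega
    rw [e, pow_succ, ← mul_assoc, ih (i + 1) (by omega) (by omega), mul_assoc,
      shift i h1 (by omega), ← mul_assoc, ← pow_succ]

/-- `P k * y 0 = y 1⁻¹ * y 0 * y 1 * P k` for `2 ≤ k ≤ n`. -/
lemma L2p (k : ℕ) (h2 : 2 ≤ k) (hk : k ≤ n) :
    P n k * y n 0 = (y n 1)⁻¹ * y n 0 * y n 1 * P n k := by
  induction k, h2 using Nat.le_induction with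
  | base =>
    have hn : 2 ≤ n := hk
    rw [P_eq (show 2 = 1 + 1 by omega), P_eq (show 1 = 0 + 1 by omega), P_zero, one_mul,
      eq_comm]
    simp only [mul_assoc]
    rw [inv_mul_eq_iff_eq_mul]
    simp only [← mul_assoc]
    exact rel1 hn
  | succ k hk2 ih =>
    rw [P_succ, mul_assoc, ← comm 0 k (by omega), ← mul_assoc, ih (by omega)]
    simp only [mul_assoc]

lemma L2 (hn : 2 ≤ n) :
    P n n * y n 0 = (y n 1)⁻¹ * y n 0 * y n 1 * P n n :=
  L2p n hn le_rfl

/-- Key lemma: `y 1 * P (m+2) * P (m+1) = P (m+2) * P (m+2)`. -/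
lemma keyG (m : ℕ) : m + 2 ≤ n →
    y n 1 * P n (m + 2) * P n (m + 1) = P n (m + 2) * P n (m + 2) := by
  induction m with
  | zero =>
    intro h
    rw [P_eq (show 0 + 2 = 1 + 1 by omega), P_eq (show 0 + 1 = 0 + 1 by omega), P_zero,
      one_mul]
    simp only [← mul_assoc]
    exact (rel1 h).symm
  | succ m ih =>
    intro h
    have hk : m + 2 ≤ n := by omega
    have hcomm : ∀ z : ArtinGroupB n,
        y n (m + 2) * (P n (m + 1) * z) = P n (m + 1) * (y n (m + 2) * z) :=
      commP' (m + 1) (m + 2) le_rfl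
    have ihc : ∀ z : ArtinGroupB n,
        y n 1 * (P n (m + 1) * (y n (m + 1) * (P n (m + 1) * z))) =
          P n (m + 1) * (y n (m + 1) * (P n (m + 1) * (y n (m + 1) * z))) := by
      intro z
      have ih2 := ih hk
      rw [P_eq (show m + 2 = (m + 1) + 1 by omega)] at ih2
      simp only [← mul_assoc]
      simp only [← mul_assoc] at ih2
      rw [ih2]
    have hbr0 : y n (m + 1) * (y n (m + 2) * y n (m + 1)) =
        y n (m + 2) * (y n (m + 1) * y n (m + 2)) := by
      simp only [← mul_assoc]
      exact braid (m + 1) (by omega) (by omega)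
    rw [P_eq (show m + 1 + 2 = (m + 1 + 1) + 1 by omega),
      P_eq (show m + 1 + 1 = (m + 1) + 1 by omega)]
    simp only [mul_assoc]
    rw [hcomm, ihc, hbr0, ← hcomm]

/-- `δ² * y (n-1) = y 1 * δ²`. -/
lemma L4 (hn : 2 ≤ n) :
    P n n * P n n * y n (n - 1) = y n 1 * P n n * P n n := by
  obtain ⟨m, rfl⟩ : ∃ m, n = m + 2 := ⟨n - 2, by omega⟩
  have e : m + 2 - 1 = m + 1 := by omega
  have hG := keyG (n := m + 2) m le_rfl
  rw [e, ← hG, mul_assoc (y (m + 2) 1 * P (m + 2) (m + 2)), ← P_succ,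
    show m + 1 + 1 = m + 2 by omega]

/-- `δ^n` commutes with `y i` for `1 ≤ i`, `i + 1 ≤ n`. -/
lemma central_hi (i : ℕ) (h1 : 1 ≤ i) (h2 : i + 1 ≤ n) :
    (P n n) ^ n * y n i = y n i * (P n n) ^ n := by
  have hn : 2 ≤ n := by omega
  set δ := P n n with hδ
  set d := n - 1 - i with hd
  have e1 : δ ^ n = δ ^ (i - 1) * (δ * (δ * δ ^ d)) := by
    rw [← pow_succ', ← pow_succ', ← pow_add]; congr 1; omega
  have c1 : ∀ z : ArtinGroupB n, δ ^ d * (y n i * z) = y n (n - 1) * (δ ^ d * z) := by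
    intro z
    have hc := chain (n := n) d i h1 (by omega)
    rw [show i + d = n - 1 by omega] at hc
    simp only [← mul_assoc]; rw [hc]
  have c4 : ∀ z : ArtinGroupB n,
      δ * (δ * (y n (n - 1) * z)) = y n 1 * (δ * (δ * z)) := by
    intro z
    have := L4 (n := n) hn
    simp only [← mul_assoc]; rw [this]
  have c2 : ∀ z : ArtinGroupB n, δ ^ (i - 1) * (y n 1 * z) = y n i * (δ ^ (i - 1) * z) := by
    intro z
    have hc := chain (n := n) (i - 1) 1 le_rfl (by omega)
    rw [show 1 + (i - 1) = i by omega] at hc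
    simp only [← mul_assoc]; rw [hc]
  calc δ ^ n * y n i = δ ^ (i - 1) * (δ * (δ * (δ ^ d * (y n i * 1)))) := by
        rw [e1]; simp only [mul_assoc, mul_one]
    _ = δ ^ (i - 1) * (δ * (δ * (y n (n - 1) * (δ ^ d * 1)))) := by rw [c1]
    _ = δ ^ (i - 1) * (y n 1 * (δ * (δ * (δ ^ d * 1)))) := by rw [c4]
    _ = y n i * (δ ^ (i - 1) * (δ * (δ * (δ ^ d * 1)))) := by rw [c2]
    _ = y n i * δ ^ n := by rw [e1]; simp only [mul_assoc, mul_one]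

/-- run shift: `R j * δ = δ * Q j` for `j + 2 ≤ n`. -/
lemma shiftQ (j : ℕ) : j + 2 ≤ n → R n j * P n n = P n n * Q n j := by
  induction j with
  | zero => intro _; rw [R_zero, Q_zero, one_mul, mul_one]
  | succ j ih =>
    intro h
    rw [R_succ, Q_succ, mul_assoc, shift (j + 1) (by omega) (by omega), ← mul_assoc,
      ih (by omega), mul_assoc]

/-- `F j`: `δ^j * y 0 = (Q j)⁻¹ * y 0 * Q j * δ^j` for `j + 2 ≤ n`. -/
lemma keyF (j : ℕ) : j + 2 ≤ n →
    (P n n) ^ j * y n 0 = (Q n j)⁻¹ * y n 0 * Q n j * (P n n) ^ j := by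
  induction j with
  | zero => intro _; simp [Q_zero]
  | succ j ih =>
    intro h
    have hn : 2 ≤ n := by omega
    have hQ : ∀ z : ArtinGroupB n,
        P n n * ((Q n j)⁻¹ * z) = (R n j)⁻¹ * (P n n * z) := by
      intro z
      have : P n n * (Q n j)⁻¹ = (R n j)⁻¹ * P n n :=
        conj_inv (shiftQ j (by omega))
      simp only [← mul_assoc]; rw [this]
    have hL2 : ∀ z : ArtinGroupB n,
        P n n * (y n 0 * z) = (y n 1)⁻¹ * (y n 0 * (y n 1 * (P n n * z))) := by
      intro z
      simp only [← mul_assoc]; rw [L2 hn]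
    have hsQ : ∀ z : ArtinGroupB n,
        P n n * (Q n j * z) = R n j * (P n n * z) := by
      intro z
      simp only [← mul_assoc]; rw [shiftQ j (by omega)]
    have ihc : ∀ z : ArtinGroupB n,
        (P n n) ^ j * (y n 0 * z) =
          (Q n j)⁻¹ * (y n 0 * (Q n j * ((P n n) ^ j * z))) := by
      intro z
      simp only [← mul_assoc]; rw [ih (by omega)]
    calc (P n n) ^ (j + 1) * y n 0
        = P n n * ((P n n) ^ j * (y n 0 * 1)) := by
          rw [pow_succ']; simp only [mul_assoc, mul_one]
      _ = P n n * ((Q n j)⁻¹ * (y n 0 * (Q n j * ((P n n) ^ j * 1)))) := by rw [ihc]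
      _ = (R n j)⁻¹ * ((y n 1)⁻¹ * (y n 0 * (y n 1 * (R n j * (P n n * ((P n n) ^ j * 1)))))) := by
          rw [hQ, hL2, hsQ]
      _ = (Q n (j + 1))⁻¹ * y n 0 * Q n (j + 1) * (P n n) ^ (j + 1) := by
          rw [QR j, mul_inv_rev, pow_succ']
          simp only [mul_assoc, mul_one]

/-- `δ^n` commutes with `y 0`. -/
lemma central_lo (hn : 2 ≤ n) :
    (P n n) ^ n * y n 0 = y n 0 * (P n n) ^ n := by
  set δ := P n n with hδ
  have hL2 : ∀ z : ArtinGroupB n,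
      δ * (y n 0 * z) = (y n 1)⁻¹ * (y n 0 * (y n 1 * (δ * z))) := by
    intro z
    simp only [← mul_assoc]; rw [L2 hn]
  have hcinv : ∀ z : ArtinGroupB n,
      δ ^ (n - 2) * ((y n 1)⁻¹ * z) = (y n (n - 1))⁻¹ * (δ ^ (n - 2) * z) := by
    intro z
    have hc := chain (n := n) (n - 2) 1 le_rfl (by omega)
    rw [show 1 + (n - 2) = n - 1 by omega] at hc
    have h2 : δ ^ (n - 2) * (y n 1)⁻¹ = (y n (n - 1))⁻¹ * δ ^ (n - 2) :=
      conj_inv hc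
    simp only [← mul_assoc]; rw [h2]
  have hF : ∀ z : ArtinGroupB n,
      δ ^ (n - 2) * (y n 0 * z) =
        (Q n (n - 2))⁻¹ * (y n 0 * (Q n (n - 2) * (δ ^ (n - 2) * z))) := by
    intro z
    have := keyF (n := n) (n - 2) (by omega)
    simp only [← mul_assoc]; rw [this]
  have hc1 : ∀ z : ArtinGroupB n,
      δ ^ (n - 2) * (y n 1 * z) = y n (n - 1) * (δ ^ (n - 2) * z) := by
    intro z
    have hc := chain (n := n) (n - 2) 1 le_rfl (by omega)
    rw [show 1 + (n - 2) = n - 1 by omega] at hc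
    simp only [← mul_assoc]; rw [hc]
  have hW : Q n (n - 2) * y n (n - 1) = (y n 0)⁻¹ * δ := by
    have h1 : Q n (n - 1) = Q n (n - 2) * y n (n - 1) := by
      rw [show n - 1 = (n - 2) + 1 by omega]; exact Q_succ (n - 2)
    have h2 : P n n = y n 0 * Q n (n - 1) := by
      rw [← PQ (n - 1), Nat.sub_add_cancel (by omega : 1 ≤ n)]
    rw [← h1, eq_comm, inv_mul_eq_iff_eq_mul, ← h2]
  have e1 : δ ^ n = δ * (δ ^ (n - 2) * δ) := by
    rw [← pow_succ, ← pow_succ']; congr 1; omega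
  calc δ ^ n * y n 0
      = δ * (δ ^ (n - 2) * (δ * (y n 0 * 1))) := by
        rw [e1]; simp only [mul_assoc, mul_one]
    _ = δ * (δ ^ (n - 2) * ((y n 1)⁻¹ * (y n 0 * (y n 1 * (δ * 1))))) := by rw [hL2]
    _ = δ * ((y n (n - 1))⁻¹ * (δ ^ (n - 2) * (y n 0 * (y n 1 * (δ * 1))))) := by
        rw [hcinv]
    _ = δ * ((y n (n - 1))⁻¹ * ((Q n (n - 2))⁻¹ * (y n 0 *
          (Q n (n - 2) * (δ ^ (n - 2) * (y n 1 * (δ * 1))))))) := by rw [hF]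
    _ = δ * ((y n (n - 1))⁻¹ * ((Q n (n - 2))⁻¹ * (y n 0 *
          (Q n (n - 2) * (y n (n - 1) * (δ ^ (n - 2) * (δ * 1))))))) := by rw [hc1]
    _ = δ * ((y n (n - 1))⁻¹ * ((Q n (n - 2))⁻¹ * (y n 0 *
          ((y n 0)⁻¹ * (δ * (δ ^ (n - 2) * (δ * 1))))))) := by
        have h3 : ∀ z : ArtinGroupB n,
            Q n (n - 2) * (y n (n - 1) * z) = (y n 0)⁻¹ * (δ * z) := by
          intro z; simp only [← mul_assoc]; rw [hW]
        rw [h3]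
    _ = y n 0 * δ ^ n := by
        have h4 : ∀ z : ArtinGroupB n,
            (y n (n - 1))⁻¹ * ((Q n (n - 2))⁻¹ * z) = δ⁻¹ * (y n 0 * z) := by
          intro z
          simp only [← mul_assoc]
          rw [← mul_inv_rev, hW, mul_inv_rev, inv_inv]
        rw [h4]
        simp only [mul_one, mul_inv_cancel_left, inv_mul_cancel_left]
        rw [e1]

end ArtinBAux

/-- In the Artin group `A(B_n)` of Coxeter type `B_n` (`n ≥ 2`), the fundamental
element `Δ(B_n) = (x_1 x_2 ⋯ x_n)^n` is central. -/
theorem artinB_delta_central (n : ℕ) (hn : 2 ≤ n) :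
    (((List.finRange n).map (fun i => PresentedGroup.of i : Fin n → ArtinGroupB n)).prod) ^ n ∈
      Subgroup.center (ArtinGroupB n) := by
  have hprod : ((List.finRange n).map (fun i => PresentedGroup.of i : Fin n → ArtinGroupB n)).prod
      = ArtinBAux.P n n := by
    unfold ArtinBAux.P
    congr 1
    apply List.ext_getElem
    · simp
    · intro i h1 h2
      simp only [List.getElem_map, List.getElem_finRange, List.getElem_range,
        List.length_map, List.length_finRange] at h1 ⊢
      rw [ArtinBAux.y_eq i (by simpa using h1)]
      congr 1
  rw [hprod, Subgroup.mem_center_iff]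
  intro g
  have hg : g ∈ Subgroup.closure (Set.range (PresentedGroup.of : Fin n → ArtinGroupB n)) := by
    rw [PresentedGroup.closure_range_of]; exact Subgroup.mem_top g
  refine Subgroup.closure_induction
    (p := fun g _ => g * (ArtinBAux.P n n) ^ n = (ArtinBAux.P n n) ^ n * g)
    ?_ (by simp) ?_ ?_ hg
  · rintro x ⟨i, rfl⟩
    have hx : (PresentedGroup.of i : ArtinGroupB n) = ArtinBAux.y n i.val := by
      rw [ArtinBAux.y_eq i.val i.isLt]
    rw [hx]
    rcases Nat.eq_zero_or_pos i.val with h0 | h0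
    · rw [h0]; exact (ArtinBAux.central_lo hn).symm
    · exact (ArtinBAux.central_hi i.val h0 i.isLt).symm
  · intro a b _ _ ha hb
    rw [mul_assoc, hb, ← mul_assoc, ha, mul_assoc]
  · intro a _ ha
    calc a⁻¹ * (ArtinBAux.P n n) ^ n
        = a⁻¹ * ((ArtinBAux.P n n) ^ n * a) * a⁻¹ := by group
      _ = a⁻¹ * (a * (ArtinBAux.P n n) ^ n) * a⁻¹ := by rw [← ha]
      _ = (ArtinBAux.P n n) ^ n * a⁻¹ := by group
end
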